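/- arXiv:0705.4362 — 6 statements merged into one kernel-verified Lean document; each statement's English description precedes it below -/
import Mathlib

section
/- Let n ≥ 3 and T = Σ_{k=1}^{n−1} P_k. Then a complex number λ is an eigenvalue of T if and only if λ ∈ {n−1, n−2, −1}. -/
open Matrix

/-- The n×n complex permutation matrix of the transposition (a b). -/
noncomputable def permP (n : ℕ) (a b : Fin n) : Matrix (Fin n) (Fin n) ℂ :=
  Matrix.of fun i j => if i = Equiv.swap a b j then 1 else 0

/-- P_k = P(1,k+1) for 1 ≤ k ≤ n-1: with 0-based indices, the transposition (0, k+1). -/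
noncomputable def Pk (n : ℕ) [NeZero n] (k : Fin (n - 1)) : Matrix (Fin n) (Fin n) ℂ :=
  permP n 0 ⟨k.1 + 1, by have := k.2; omega⟩

/-!
Writing `T` as the sum of the transpositions `(0 b)`, `b ≠ 0`, one has `(T v)₀ = ∑_{b ≠ 0} v_b` and
`(T v)ᵢ = v₀ + (n - 2) vᵢ` for `i ≠ 0`. For an eigenvector with eigenvalue `λ ≠ n - 2` this forces
`(λ - (n - 2)) vᵢ = v₀ ≠ 0` for all `i ≠ 0`, and then row `0` gives `λ (λ - (n - 2)) = n - 1`, i.e.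
`λ = n - 1` or `λ = -1`. Conversely `(1, …, 1)`, `e₁ - e₂` and `(1 - n, 1, …, 1)` are eigenvectors
for `n - 1`, `n - 2` and `-1`.
-/

open Finset

theorem Matrix.mem_spectrum_iff_exists_mulVec_eq_smul {ι K : Type*} [Fintype ι] [DecidableEq ι]
    [Field K] (A : Matrix ι ι K) (μ : K) :
    μ ∈ spectrum K A ↔ ∃ v ≠ 0, A *ᵥ v = μ • v := by
  rw [← spectrum_toLin', ← Module.End.hasEigenvalue_iff_mem_spectrum,
    Module.End.hasEigenvalue_iff, Submodule.ne_bot_iff]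
  simp only [Module.End.mem_eigenspace_iff, toLin'_apply]
  exact ⟨fun ⟨v, hAv, hv⟩ => ⟨v, hv, hAv⟩, fun ⟨v, hv, hAv⟩ => ⟨v, hAv, hv⟩⟩

section StarTranspositionMatrix

variable {ι R : Type*} [Fintype ι] [DecidableEq ι] [CommRing R]

variable (R) in
noncomputable def starTranspositionMatrix (a : ι) : Matrix ι ι R :=
  ∑ b ∈ univ.erase a, (Equiv.swap a b).permMatrix R

theorem starTranspositionMatrix_mulVec_apply_self (a : ι) (v : ι → R) :
    (starTranspositionMatrix R a *ᵥ v) a = ∑ b ∈ univ.erase a, v b := by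
  simp only [starTranspositionMatrix, sum_mulVec, permMatrix_mulVec, Finset.sum_apply,
    Function.comp_apply, Equiv.swap_apply_left]

theorem starTranspositionMatrix_mulVec_apply_of_ne {a i : ι} (hi : i ≠ a) (v : ι → R) :
    (starTranspositionMatrix R a *ᵥ v) i = v a + ((Fintype.card ι : R) - 2) * v i := by
  have hi' : i ∈ univ.erase a := mem_erase.2 ⟨hi, mem_univ i⟩
  have hcard : #((univ.erase a).erase i) + 2 = Fintype.card ι := by
    rw [card_erase_of_mem hi', card_erase_of_mem (mem_univ a), card_univ]
    have : 2 ≤ Fintype.card ι := Fintype.one_lt_card_iff.2 ⟨i, a, hi⟩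
    omega
  have hfix : ∀ b ∈ (univ.erase a).erase i, v (Equiv.swap a b i) = v i := fun b hb => by
    rw [Equiv.swap_apply_of_ne_of_ne hi (ne_of_mem_erase hb).symm]
  simp only [starTranspositionMatrix, sum_mulVec, permMatrix_mulVec, Finset.sum_apply,
    Function.comp_apply]
  rw [← add_sum_erase _ _ hi', Equiv.swap_apply_right, sum_congr rfl hfix, sum_const,
    nsmul_eq_mul, ← hcard]
  push_cast
  ring

variable {K : Type*} [Field K]

theorem eq_of_starTranspositionMatrix_mulVec_eq_smul {a : ι} {v : ι → K} {μ : K} (hv : v ≠ 0)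
    (h : starTranspositionMatrix K a *ᵥ v = μ • v) :
    μ = Fintype.card ι - 1 ∨ μ = Fintype.card ι - 2 ∨ μ = -1 := by
  set N : K := (Fintype.card ι : K)
  by_cases hμ : μ = N - 2
  · exact Or.inr (Or.inl hμ)
  have hrow : ∀ i ≠ a, (μ - (N - 2)) * v i = v a := fun i hi => by
    have := congrFun h i
    rw [starTranspositionMatrix_mulVec_apply_of_ne hi, Pi.smul_apply, smul_eq_mul] at this
    linear_combination -this
  have hva : v a ≠ 0 := fun hva => hv <| funext fun i => by
    by_cases hi : i = a
    · rw [hi, hva, Pi.zero_apply]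
    · simpa [hva, sub_eq_zero, hμ] using hrow i hi
  have hsum : (μ - (N - 2)) * (μ * v a) = (N - 1) * v a := by
    have hcol := congrFun h a
    rw [starTranspositionMatrix_mulVec_apply_self, Pi.smul_apply, smul_eq_mul] at hcol
    calc (μ - (N - 2)) * (μ * v a) = ∑ b ∈ univ.erase a, (μ - (N - 2)) * v b := by
          rw [← hcol, mul_sum]
      _ = ∑ b ∈ univ.erase a, v a := sum_congr rfl fun b hb => hrow b (ne_of_mem_erase hb)
      _ = (N - 1) * v a := by
          rw [sum_const, card_erase_of_mem (mem_univ a), card_univ, nsmul_eq_mul,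
            Nat.cast_sub (Fintype.card_pos_iff.2 ⟨a⟩), Nat.cast_one]
  have hroots : (μ - (N - 1)) * (μ + 1) * v a = 0 := by linear_combination hsum
  rcases mul_eq_zero.1 ((mul_eq_zero.1 hroots).resolve_right hva) with h1 | h1
  · exact Or.inl (sub_eq_zero.1 h1)
  · exact Or.inr (Or.inr (eq_neg_of_add_eq_zero_left h1))

theorem starTranspositionMatrix_mulVec_one (a : ι) :
    starTranspositionMatrix K a *ᵥ 1 = ((Fintype.card ι : K) - 1) • 1 := by
  ext i
  by_cases hi : i = a
  · subst hi
    rw [starTranspositionMatrix_mulVec_apply_self]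
    simp only [Pi.one_apply, Pi.smul_apply, sum_const, nsmul_eq_mul, smul_eq_mul, mul_one]
    rw [card_erase_of_mem (mem_univ i), card_univ, Nat.cast_sub (Fintype.card_pos_iff.2 ⟨i⟩),
      Nat.cast_one]
  · rw [starTranspositionMatrix_mulVec_apply_of_ne hi]
    simp only [Pi.one_apply, Pi.smul_apply, smul_eq_mul]
    ring

theorem starTranspositionMatrix_mulVec_single_sub_single {a b c : ι} (hb : b ≠ a) (hc : c ≠ a) :
    starTranspositionMatrix K a *ᵥ (Pi.single b 1 - Pi.single c 1) =
      ((Fintype.card ι : K) - 2) • (Pi.single b 1 - Pi.single c 1) := by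
  ext i
  by_cases hi : i = a
  · subst hi
    rw [starTranspositionMatrix_mulVec_apply_self]
    simp [sum_sub_distrib, sum_pi_single', hb, hc, hb.symm, hc.symm]
  · rw [starTranspositionMatrix_mulVec_apply_of_ne hi]
    simp [hb.symm, hc.symm]

theorem starTranspositionMatrix_mulVec_update_one (a : ι) :
    starTranspositionMatrix K a *ᵥ Function.update (1 : ι → K) a (1 - Fintype.card ι) =
      (-1 : K) • Function.update (1 : ι → K) a (1 - Fintype.card ι) := by
  ext i
  by_cases hi : i = a
  · subst hi
    rw [starTranspositionMatrix_mulVec_apply_self, sum_congr rfl fun b hb =>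
      Function.update_of_ne (ne_of_mem_erase hb) _ _]
    simp only [Pi.one_apply, Pi.smul_apply, sum_const, nsmul_eq_mul, smul_eq_mul, mul_one,
      Function.update_self]
    rw [card_erase_of_mem (mem_univ i), card_univ, Nat.cast_sub (Fintype.card_pos_iff.2 ⟨i⟩),
      Nat.cast_one]
    ring
  · rw [starTranspositionMatrix_mulVec_apply_of_ne hi]
    simp only [Function.update_self, Function.update_of_ne hi, Pi.one_apply, Pi.smul_apply,
      smul_eq_mul]
    ring

theorem mem_spectrum_starTranspositionMatrix_iff (hι : 3 ≤ Fintype.card ι) (a : ι) (μ : K) :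
    μ ∈ spectrum K (starTranspositionMatrix K a) ↔
      μ = Fintype.card ι - 1 ∨ μ = Fintype.card ι - 2 ∨ μ = -1 := by
  rw [mem_spectrum_iff_exists_mulVec_eq_smul]
  refine ⟨fun ⟨v, hv, h⟩ => eq_of_starTranspositionMatrix_mulVec_eq_smul hv h, ?_⟩
  obtain ⟨b, hb, c, hc, hbc⟩ : ∃ b ∈ univ.erase a, ∃ c ∈ univ.erase a, b ≠ c := by
    rw [← one_lt_card, card_erase_of_mem (mem_univ a), card_univ]
    omega
  rintro (rfl | rfl | rfl)
  · exact ⟨1, Function.ne_iff.2 ⟨a, one_ne_zero⟩, starTranspositionMatrix_mulVec_one a⟩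
  · refine ⟨_, fun h => ?_, starTranspositionMatrix_mulVec_single_sub_single
      (ne_of_mem_erase hb) (ne_of_mem_erase hc)⟩
    simpa [hbc] using congrFun h b
  · refine ⟨_, fun h => ?_, starTranspositionMatrix_mulVec_update_one a⟩
    simpa [ne_of_mem_erase hb] using congrFun h b

end StarTranspositionMatrix

theorem permP_eq_permMatrix (n : ℕ) (a b : Fin n) :
    permP n a b = (Equiv.swap a b).permMatrix ℂ := by
  ext i j
  simp [permP, PEquiv.toMatrix_apply, Equiv.swap_apply_eq_iff]

theorem sum_Pk_eq_starTranspositionMatrix (n : ℕ) [NeZero n] :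
    ∑ k : Fin (n - 1), Pk n k = starTranspositionMatrix ℂ (0 : Fin n) := by
  refine sum_bij (fun k _ => ⟨k.1 + 1, by omega⟩) (fun k _ => ?_) (fun k _ l _ h => ?_)
    (fun j hj => ?_) (fun k _ => permP_eq_permMatrix n _ _)
  · simp [Fin.ext_iff]
  · simpa [Fin.ext_iff] using h
  · have hj0 : j.1 ≠ 0 := fun h => ne_of_mem_erase hj (Fin.ext h)
    exact ⟨⟨j.1 - 1, by omega⟩, mem_univ _, Fin.ext (Nat.sub_add_cancel (Nat.one_le_iff_ne_zero.2 hj0))⟩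

/-- For n ≥ 3, λ is an eigenvalue of T = Σ_{k=1}^{n-1} P_k iff λ ∈ {n-1, n-2, -1}. -/
theorem T_eigenvalues (n : ℕ) [NeZero n] (hn : 3 ≤ n) (lam : ℂ) :
    lam ∈ spectrum ℂ (∑ k : Fin (n - 1), Pk n k) ↔
      lam = (n : ℂ) - 1 ∨ lam = (n : ℂ) - 2 ∨ lam = -1 := by
  rw [sum_Pk_eq_starTranspositionMatrix,
    mem_spectrum_starTranspositionMatrix_iff (by rwa [Fintype.card_fin]), Fintype.card_fin]
end

section
/- Let n ≥ 1, z₀ ∈ ℂ, r > 0, ρ ∈ ℂ, and let a_{−1}, a_0, a_1, … be n×n complex matrices such that A(z) = a_{−1}/(z−z₀) + Σ_{j≥0} a_j (z−z₀)^j, with the power series converging for |z−z₀| < r. Suppose m ∈ ℤ and b_m, b_{m+1}, … are n×n complex matrices with b_m ≠ 0 such that W(z) = Σ_{p≥m} b_p (z−z₀)^p converges for 0 < |z−z₀| < r and W′(z) = ρ·A(z)·W(z) for all z with 0 < |z−z₀| < r. Then m is an eigenvalue of the matrix ρ·a_{−1}, i.e. det(m·I_n − ρ·a_{−1}) = 0.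 -/
/-!
Write `W(z) = (z - z₀)^m F(z - z₀)` and `A(z) = a₋₁ / (z - z₀) + G(z - z₀)`. The series of `F`
converges on the punctured disc, hence on the whole disc, so `F` and `G` are holomorphic at `0`
with `F(0) = b_m`. Cancelling `(z - z₀)^(m-1)` in `W' = ρ A W` gives
`m F(w) + w F'(w) = ρ (a₋₁ + w G(w)) F(w)` for `0 < |w| < r`, and letting `w → 0` yields
`m b_m = ρ a₋₁ b_m`. Since `b_m ≠ 0`, the matrix `m - ρ a₋₁` is singular.
-/

open Metric
open scoped Topology

namespace FormalMultilinearSeries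

variable {𝕜 E : Type*}

section NontriviallyNormedField

variable [NontriviallyNormedField 𝕜] [NormedAddCommGroup E] [NormedSpace 𝕜 E]

variable (𝕜) in
noncomputable def ofCoeff (c : ℕ → E) : FormalMultilinearSeries 𝕜 𝕜 E :=
  fun n => ContinuousMultilinearMap.mkPiRing 𝕜 (Fin n) (c n)

@[simp]
lemma coeff_ofCoeff (c : ℕ → E) (n : ℕ) : (ofCoeff 𝕜 c).coeff n = c n := by
  simp [coeff, ofCoeff]

end NontriviallyNormedField

variable [RCLike 𝕜] [NormedAddCommGroup E] [NormedSpace 𝕜 E]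

lemma le_radius_ofCoeff_of_summable {c : ℕ → E} {r : ℝ}
    (h : ∀ z : 𝕜, z ≠ 0 → ‖z‖ < r → Summable fun n => z ^ n • c n) :
    ENNReal.ofReal r ≤ (ofCoeff 𝕜 c).radius := by
  refine ENNReal.le_of_forall_nnreal_lt fun s hs => ?_
  rcases eq_or_ne s 0 with rfl | hs0
  · simp
  have hsr : (s : ℝ) < r := by
    rwa [← ENNReal.ofReal_coe_nnreal, ENNReal.ofReal_lt_ofReal_iff_of_nonneg s.coe_nonneg] at hs
  have hnorm : ‖((s : ℝ) : 𝕜)‖ = s := by simp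
  apply le_radius_of_tendsto (l := 0)
  have := (h ((s : ℝ) : 𝕜) (by simpa using hs0) (by rwa [hnorm])).tendsto_atTop_zero.norm
  simpa [norm_smul, hnorm, mul_comm] using this

lemma hasFPowerSeriesOnBall_ofCoeff [CompleteSpace E] {c : ℕ → E} {r : ℝ} (hr : 0 < r)
    (h : ∀ z : 𝕜, z ≠ 0 → ‖z‖ < r → Summable fun n => z ^ n • c n) :
    HasFPowerSeriesOnBall (ofCoeff 𝕜 c).sum (ofCoeff 𝕜 c) (0 : 𝕜) (ENNReal.ofReal r) :=
  have hr' : 0 < ENNReal.ofReal r := ENNReal.ofReal_pos.2 hr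
  have hrad := le_radius_ofCoeff_of_summable h
  ((ofCoeff 𝕜 c).hasFPowerSeriesOnBall (hr'.trans_le hrad)).mono hr' hrad

end FormalMultilinearSeries

namespace HasFPowerSeriesOnBall

open FormalMultilinearSeries

variable {𝕜 E : Type*} [NontriviallyNormedField 𝕜] [NormedAddCommGroup E] [NormedSpace 𝕜 E]
  {f : 𝕜 → E} {c : ℕ → E} {r : ℝ}

lemma hasSum_pow_smul (hf : HasFPowerSeriesOnBall f (ofCoeff 𝕜 c) 0 (ENNReal.ofReal r))
    {z : 𝕜} (hz : ‖z‖ < r) : HasSum (fun n => z ^ n • c n) (f z) := by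
  simpa using hf.hasSum (y := z) (by simpa using hz)

lemma apply_zero_eq_coeff_zero (hf : HasFPowerSeriesOnBall f (ofCoeff 𝕜 c) 0 (ENNReal.ofReal r)) :
    f 0 = c 0 := by
  simpa using (hf.coeff_zero 0).symm

end HasFPowerSeriesOnBall

lemma hasSum_pow_smul_of_hasSum_zpow_add_smul {𝕜 E : Type*} [Field 𝕜] [AddCommMonoid E]
    [TopologicalSpace E] [Module 𝕜 E] [ContinuousConstSMul 𝕜 E] {c : ℕ → E} {z : 𝕜} {m : ℤ}
    {x : E} (hz : z ≠ 0) (h : HasSum (fun n : ℕ => z ^ (m + n) • c n) x) :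
    HasSum (fun n => z ^ n • c n) (z ^ (-m) • x) := by
  convert h.const_smul (z ^ (-m)) using 2 with n
  rw [smul_smul, ← zpow_add₀ hz, neg_add_cancel_left, zpow_natCast]

lemma Matrix.det_eq_zero_of_mul_eq_zero {ι K : Type*} [Fintype ι] [DecidableEq ι] [Field K]
    {M B : Matrix ι ι K} (hMB : M * B = 0) (hB : B ≠ 0) : M.det = 0 := by
  by_contra hM
  exact hB (((M.isUnit_iff_isUnit_det).2 (isUnit_iff_ne_zero.2 hM)).mul_right_eq_zero.1 hMB)

section Indicial

open scoped Matrix.Norms.Elementwise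

variable {ι : Type*} [Fintype ι]

lemma indicial_identity {W A F G : ℂ → Matrix ι ι ℂ} {R F' : Matrix ι ι ℂ} {m : ℤ} {w : ℂ}
    (hw : w ≠ 0) (hWF : W =ᶠ[𝓝 w] fun z => z ^ m • F z) (hAG : w • A w = R + w • G w)
    (hF : HasDerivAt F F' w) (hODE : HasDerivAt W (A w * W w) w) :
    (m : ℂ) • F w + w • F' = (R + w • G w) * F w := by
  have hW : HasDerivAt W (w ^ m • F' + ((m : ℂ) * w ^ (m - 1)) • F w) w :=
    ((hasDerivAt_zpow m w (Or.inl hw)).smul hF).congr_of_eventuallyEq hWF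
  have key := hODE.unique hW
  rw [hWF.eq_of_nhds] at key
  have hm : w ^ m = w * w ^ (m - 1) := by rw [← zpow_one_add₀ hw, add_sub_cancel]
  refine smul_right_injective _ (zpow_ne_zero (m - 1) hw) ?_
  calc w ^ (m - 1) • ((m : ℂ) • F w + w • F')
      = w ^ m • F' + ((m : ℂ) * w ^ (m - 1)) • F w := by rw [hm]; module
    _ = A w * (w ^ m • F w) := key.symm
    _ = w ^ (m - 1) • ((w • A w) * F w) := by
      rw [hm, mul_smul_comm, smul_mul_assoc, smul_smul, mul_comm]
    _ = w ^ (m - 1) • ((R + w • G w) * F w) := by rw [hAG]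

lemma smul_eq_mul_of_eventually_indicial {F G : ℂ → Matrix ι ι ℂ} {R : Matrix ι ι ℂ} {μ : ℂ}
    (hF : AnalyticAt ℂ F 0) (hG : ContinuousAt G 0)
    (h : ∀ᶠ w in 𝓝[≠] 0, μ • F w + w • deriv F w = (R + w • G w) * F w) :
    μ • F 0 = R * F 0 := by
  have hl : ContinuousAt (fun w => μ • F w + w • deriv F w) 0 :=
    (hF.continuousAt.const_smul μ).add (continuousAt_id.smul hF.deriv.continuousAt)
  have hr : ContinuousAt (fun w => (R + w • G w) * F w) 0 :=
    (continuousAt_const.add (continuousAt_id.smul hG)).mul hF.continuousAt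
  simpa using ((hl.eventuallyEq_nhds_iff_eventuallyEq_nhdsNE hr).1 h).eq_of_nhds

open FormalMultilinearSeries in
theorem smul_leading_coeff_eq_mul_of_laurent_solution {r : ℝ} (hr : 0 < r) {R : Matrix ι ι ℂ}
    {a b : ℕ → Matrix ι ι ℂ} {A W : ℂ → Matrix ι ι ℂ} {m : ℤ}
    (hA : ∀ w : ℂ, w ≠ 0 → ‖w‖ < r → HasSum (fun p => w ^ p • a p) (A w - w⁻¹ • R))
    (hW : ∀ w : ℂ, w ≠ 0 → ‖w‖ < r → HasSum (fun p : ℕ => w ^ (m + p) • b p) (W w))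
    (hODE : ∀ w : ℂ, w ≠ 0 → ‖w‖ < r → HasDerivAt W (A w * W w) w) :
    (m : ℂ) • b 0 = R * b 0 := by
  have hb := hasFPowerSeriesOnBall_ofCoeff hr fun w hw hwr =>
    (hasSum_pow_smul_of_hasSum_zpow_add_smul hw (hW w hw hwr)).summable
  have ha := hasFPowerSeriesOnBall_ofCoeff hr fun w hw hwr => (hA w hw hwr).summable
  set F := (ofCoeff ℂ b).sum
  set G := (ofCoeff ℂ a).sum
  have hWF : ∀ w : ℂ, w ≠ 0 → ‖w‖ < r → W w = w ^ m • F w := fun w hw hwr => by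
    have hF := (hasSum_pow_smul_of_hasSum_zpow_add_smul hw (hW w hw hwr)).unique
      (hb.hasSum_pow_smul hwr)
    rw [← hF, smul_smul, ← zpow_add₀ hw, add_neg_cancel, zpow_zero, one_smul]
  have hAG : ∀ w : ℂ, w ≠ 0 → ‖w‖ < r → w • A w = R + w • G w := fun w hw hwr => by
    rw [← (hA w hw hwr).unique (ha.hasSum_pow_smul hwr), smul_sub, smul_inv_smul₀ hw,
      add_sub_cancel]
  have hid : ∀ᶠ w in 𝓝[≠] 0, (m : ℂ) • F w + w • deriv F w = (R + w • G w) * F w := by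
    filter_upwards [self_mem_nhdsWithin, mem_nhdsWithin_of_mem_nhds (ball_mem_nhds 0 hr)]
      with w hw hwr
    rw [mem_ball_zero_iff] at hwr
    refine indicial_identity hw ?_ (hAG w hw hwr)
      (hb.analyticAt_of_mem (by simpa using hwr)).differentiableAt.hasDerivAt (hODE w hw hwr)
    filter_upwards [eventually_ne_nhds hw, isOpen_ball.mem_nhds (mem_ball_zero_iff.2 hwr)]
      with z hz hzr
    exact hWF z hz (mem_ball_zero_iff.1 hzr)
  simpa only [hb.apply_zero_eq_coeff_zero] using
    smul_eq_mul_of_eventually_indicial hb.analyticAt ha.analyticAt.continuousAt hid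

end Indicial

/-- Necessary condition: if `A` has a simple pole at `z₀` with residue `a₋₁` and analytic
part `Σ aⱼ (z-z₀)ʲ` on `|z-z₀| < r`, and a nonzero Laurent-type solution
`W(z) = Σ_{p≥m} b_p (z-z₀)^p` (indexed here by `b : ℕ → M_n(ℂ)`, `b_p := b (p-m)`)
of `W' = ρ·A·W` exists on `0 < |z-z₀| < r`, then `m` is an eigenvalue of `ρ·a₋₁`,
i.e. `det (m·I - ρ·a₋₁) = 0`.  All derivatives and series are entrywise. -/
theorem pole_order_is_eigenvalue (n : ℕ) (z₀ : ℂ) (r : ℝ) (hr : 0 < r) (ρ : ℂ)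
    (am1 : Matrix (Fin n) (Fin n) ℂ) (a : ℕ → Matrix (Fin n) (Fin n) ℂ)
    (A : ℂ → Matrix (Fin n) (Fin n) ℂ)
    (hA : ∀ z : ℂ, z ≠ z₀ → ‖z - z₀‖ < r → ∀ i j,
      HasSum (fun p : ℕ => a p i j * (z - z₀) ^ p) (A z i j - am1 i j / (z - z₀)))
    (m : ℤ) (b : ℕ → Matrix (Fin n) (Fin n) ℂ) (hb : b 0 ≠ 0)
    (W : ℂ → Matrix (Fin n) (Fin n) ℂ)
    (hW : ∀ z : ℂ, z ≠ z₀ → ‖z - z₀‖ < r → ∀ i j,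
      HasSum (fun p : ℕ => b p i j * (z - z₀) ^ (m + (p : ℤ))) (W z i j))
    (hODE : ∀ z : ℂ, z ≠ z₀ → ‖z - z₀‖ < r → ∀ i j,
      HasDerivAt (fun w => W w i j) ((ρ • (A z * W z)) i j) z) :
    Matrix.det ((m : ℂ) • (1 : Matrix (Fin n) (Fin n) ℂ) - ρ • am1) = 0 := by
  have shift {w : ℂ} (hw : w ≠ 0) (hwr : ‖w‖ < r) : z₀ + w ≠ z₀ ∧ ‖z₀ + w - z₀‖ < r :=
    ⟨by simpa using hw, by simpa using hwr⟩
  have key : (m : ℂ) • b 0 = (ρ • am1) * b 0 := by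
    refine smul_leading_coeff_eq_mul_of_laurent_solution hr (a := fun p => ρ • a p)
      (A := fun w => ρ • A (z₀ + w)) (W := fun w => W (z₀ + w)) ?_ ?_ ?_ <;>
      intro w hw hwr <;> obtain ⟨hz, hzr⟩ := shift hw hwr
    · refine Pi.hasSum.2 fun i => Pi.hasSum.2 fun j => ?_
      simpa [div_eq_inv_mul, mul_sub, mul_assoc, mul_comm, mul_left_comm] using
        (hA _ hz hzr i j).mul_left ρ
    · refine Pi.hasSum.2 fun i => Pi.hasSum.2 fun j => ?_
      simpa [mul_comm] using hW _ hz hzr i j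
    · refine hasDerivAt_pi.2 fun i => hasDerivAt_pi.2 fun j => ?_
      simpa [smul_mul_assoc] using (hODE _ hz hzr i j).comp_const_add z₀ w
  refine Matrix.det_eq_zero_of_mul_eq_zero ?_ hb
  rw [sub_mul, Matrix.smul_mul, Matrix.one_mul, key, sub_self]
end

section
/- Let n ≥ 1, z₀ ∈ ℂ, r > 0, ρ ∈ ℂ, and let a_{−1}, a_0, a_1, … be n×n complex matrices such that A(z) = a_{−1}/(z−z₀) + Σ_{j≥0} a_j (z−z₀)^j, with the power series converging for |z−z₀| < r. Let m ≤ M be integers such that M is an eigenvalue of ρ·a_{−1} and no integer q > M is an eigenvalue of ρ·a_{−1}. Suppose n×n matrices b_m, b_{m+1}, …, b_M with b_m ≠ 0 satisfy the recursion ((q+1)·I_n − ρ·a_{−1})·b_{q+1} = Σ_{j≥0, ℓ≥m, j+ℓ=q} ρ·a_j·b_ℓ for every integer q with m ≤ q+1 ≤ M. Then there exist n×n matrices b_p for p > M and a radius r′ with 0 < r′ ≤ r such that W(z) = Σ_{p≥m} b_p (z−z₀)^p converges for 0 < |z−z₀| < r′ and satisfies W′(z) = ρ·A(z)·W(z) for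 all z with 0 < |z−z₀| < r′. -/
/-!
Frobenius' method. Writing `W(z) = Σ_k c_k (z - z₀)^(m + k)`, the equation `W' = ρ A W` is
equivalent to the recursion `((m + k) - ρ a₋₁) c_k = Σ_{l < k} ρ a_{k-1-l} c_l`. Up to `k = M - m`
it is the hypothesis on `b`; beyond, no `m + k` is an eigenvalue of `ρ a₋₁`, so it can be solved
with the resolvent. The resolvent tends to `0` at infinity, hence is bounded along the integers,
and comparing with a geometric majorant shows `‖c_k‖ ≤ D τ^k`. The series therefore converges
near `z₀`, can be differentiated termwise, and the Cauchy product with the analytic part of `A`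
turns the recursion back into the differential equation.
-/

open Filter Finset Matrix Metric Topology

theorem exists_le_mul_pow_of_le_convolution {x : ℕ → ℝ} {N : ℕ} {C σ : ℝ} (hC : 0 ≤ C)
    (hσ : 0 ≤ σ) (hx : ∀ k, N ≤ k → x k ≤ C * ∑ l ∈ range k, σ ^ (k - 1 - l) * x l) :
    ∃ D τ : ℝ, 0 < τ ∧ ∀ k, x k ≤ D * τ ^ k := by
  set τ := σ + C + 1
  have hτ : 0 < τ := by positivity
  set D := ∑ k ∈ range N, |x k| / τ ^ k
  have hD : 0 ≤ D := sum_nonneg fun _ _ => by positivity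
  -- `(∑ τ^l σ^(k-1-l)) (τ - σ) = τ^k - σ^k` and `τ - σ > C`
  have hgeom : ∀ k, C * ∑ l ∈ range k, σ ^ (k - 1 - l) * τ ^ l ≤ τ ^ k := by
    intro k
    have h := geom_sum₂_mul τ σ k
    have hS : 0 ≤ ∑ l ∈ range k, σ ^ (k - 1 - l) * τ ^ l := sum_nonneg fun _ _ => by positivity
    simp only [mul_comm (τ ^ _)] at h
    nlinarith [pow_nonneg hσ k]
  refine ⟨D, τ, hτ, fun k => ?_⟩
  induction k using Nat.strong_induction_on with
  | _ k ih =>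
  rcases lt_or_ge k N with hk | hk
  · calc x k ≤ |x k| / τ ^ k * τ ^ k := by
          rw [div_mul_cancel₀ _ (by positivity)]; exact le_abs_self _
      _ ≤ D * τ ^ k := by
          gcongr
          exact single_le_sum (f := fun i => |x i| / τ ^ i) (fun i _ => by positivity)
            (mem_range.2 hk)
  · calc x k ≤ C * ∑ l ∈ range k, σ ^ (k - 1 - l) * (D * τ ^ l) := by
          refine (hx k hk).trans (mul_le_mul_of_nonneg_left (sum_le_sum fun l hl => ?_) hC)
          exact mul_le_mul_of_nonneg_left (ih l (mem_range.1 hl)) (by positivity)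
      _ = D * (C * ∑ l ∈ range k, σ ^ (k - 1 - l) * τ ^ l) := by
          rw [mul_sum, mul_sum, mul_sum]; exact sum_congr rfl fun _ _ => by ring
      _ ≤ D * τ ^ k := mul_le_mul_of_nonneg_left (hgeom k) hD

theorem sum_Icc_sub_toNat {M : Type*} [AddCommMonoid M] (f : ℕ → ℤ → M) (m : ℤ) (k : ℕ) :
    ∑ l ∈ Icc m (m + k - 1), f (m + k - 1 - l).toNat l =
      ∑ i ∈ range k, f (k - 1 - i) (m + i) := by
  rw [Int.Icc_eq_finset_map, sum_map, show (m + k - 1 + 1 - m).toNat = k by omega]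
  refine sum_congr rfl fun i hi => ?_
  have := mem_range.1 hi
  simp only [Function.Embedding.trans_apply, Nat.castEmbedding_apply, addLeftEmbedding_apply]
  rw [show (m + k - 1 - (m + i)).toNat = k - 1 - i by omega]

section PowerSeries

variable {E : Type*} [NormedAddCommGroup E] [NormedSpace ℂ E]

theorem exists_norm_le_mul_inv_pow_of_summable {α : ℕ → E} {s : ℂ} (hs : s ≠ 0)
    (h : Summable fun j => s ^ j • α j) : ∃ C, ∀ j, ‖α j‖ ≤ C * ‖s‖⁻¹ ^ j := by
  obtain ⟨C, hC⟩ :=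
    isBounded_iff_forall_norm_le.1 (isBounded_range_of_tendsto _ h.tendsto_atTop_zero)
  refine ⟨C, fun j => ?_⟩
  have hj := hC _ ⟨j, rfl⟩
  rw [norm_smul, norm_pow] at hj
  rw [inv_pow, ← div_eq_mul_inv, le_div_iff₀ (by positivity)]
  linarith

theorem summable_norm_pow_smul_of_norm_le {c : ℕ → E} {D τ : ℝ} (hc : ∀ k, ‖c k‖ ≤ D * τ ^ k)
    (hτ : 0 ≤ τ) {u : ℂ} (hu : ‖u‖ * τ < 1) : Summable fun k => ‖u ^ k • c k‖ := by
  refine .of_nonneg_of_le (fun _ => norm_nonneg _) (fun k => ?_)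
    ((summable_geometric_of_lt_one (by positivity) hu).mul_left D)
  rw [norm_smul, norm_pow, mul_pow]
  calc ‖u‖ ^ k * ‖c k‖ ≤ ‖u‖ ^ k * (D * τ ^ k) := by gcongr; exact hc k
    _ = D * (‖u‖ ^ k * τ ^ k) := by ring

theorem norm_natCast_mul_pow_smul_le {c : ℕ → E} {D τ δ : ℝ} (hc : ∀ k, ‖c k‖ ≤ D * τ ^ k)
    (hδ : 0 < δ) {u : ℂ} (hu : ‖u‖ ≤ δ) (k : ℕ) :
    ‖((k : ℂ) * u ^ (k - 1)) • c k‖ ≤ D / δ * (k * (δ * τ) ^ k) := by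
  rcases k with _ | k
  · simp
  rw [norm_smul, norm_mul, norm_pow, Complex.norm_natCast, Nat.add_sub_cancel]
  calc ((k + 1 : ℕ) : ℝ) * ‖u‖ ^ k * ‖c (k + 1)‖ ≤ (k + 1 : ℕ) * δ ^ k * (D * τ ^ (k + 1)) := by
        gcongr; exact hc _
    _ = D / δ * ((k + 1 : ℕ) * (δ * τ) ^ (k + 1)) := by field_simp; ring

theorem summable_natCast_mul_pow_smul [CompleteSpace E] {c : ℕ → E} {D τ δ : ℝ}
    (hc : ∀ k, ‖c k‖ ≤ D * τ ^ k) (hτ : 0 ≤ τ) (hδ : 0 < δ) (hδτ : δ * τ < 1) {u : ℂ}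
    (hu : ‖u‖ ≤ δ) : Summable fun k : ℕ => ((k : ℂ) * u ^ (k - 1)) • c k := by
  have hδτ' : ‖δ * τ‖ < 1 := by rwa [Real.norm_of_nonneg (by positivity)]
  exact .of_norm_bounded ((hasSum_coe_mul_geometric_of_norm_lt_one hδτ').summable.mul_left _)
    (norm_natCast_mul_pow_smul_le hc hδ hu)

theorem hasDerivAt_tsum_pow_smul [CompleteSpace E] {c : ℕ → E} {D τ δ : ℝ}
    (hc : ∀ k, ‖c k‖ ≤ D * τ ^ k) (hτ : 0 ≤ τ) (hδτ : δ * τ < 1) {z₀ z : ℂ}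
    (hz : z ∈ ball z₀ δ) :
    HasDerivAt (fun w => ∑' k, (w - z₀) ^ k • c k)
      (∑' k : ℕ, ((k : ℂ) * (z - z₀) ^ (k - 1)) • c k) z := by
  have hδ : 0 < δ := pos_of_mem_ball hz
  have hδτ' : ‖δ * τ‖ < 1 := by rwa [Real.norm_of_nonneg (by positivity)]
  refine hasDerivAt_tsum_of_isPreconnected
    ((hasSum_coe_mul_geometric_of_norm_lt_one hδτ').summable.mul_left (D / δ)) isOpen_ball
    (convex_ball z₀ δ).isPreconnected (fun k w _ => ?_)
    (fun k w hw => norm_natCast_mul_pow_smul_le hc hδ (mem_ball_iff_norm.1 hw).le k)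
    (mem_ball_self hδ) ?_ hz
  · simpa using (((hasDerivAt_id w).sub_const z₀).pow k).smul_const (c k)
  · simpa using (summable_norm_pow_smul_of_norm_le hc hτ (u := 0) (by simp)).of_norm

end PowerSeries

section FrobeniusRecursion

variable {R : Type*} [Ring R] [Algebra ℂ R]

/-- The coefficient equations of `W(z) = Σ_k c_k (z - z₀)^(m + k)` for
`W' = (B / (z - z₀) + Σ_j α_j (z - z₀)^j) W`; in the theorem `c_k = b_{m+k}`. -/
def IsFrobeniusSeq (B : R) (α : ℕ → R) (m : ℤ) (c : ℕ → R) : Prop :=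
  ∀ k : ℕ, (algebraMap ℂ R (m + k) - B) * c k = ∑ l ∈ range k, α (k - 1 - l) * c l

noncomputable def frobeniusCoeff (B : R) (α : ℕ → R) (m M : ℤ) (b : ℤ → R) : ℕ → R
  | k => if m + k ≤ M then b (m + k) else
      resolvent B (m + k : ℂ) * ∑ l : Fin k, α (k - 1 - l) * frobeniusCoeff B α m M b l

variable {B : R} {α : ℕ → R} {m M : ℤ} {b : ℤ → R}

theorem frobenius_recursion_of_sum_Icc
    (hrec : ∀ q : ℤ, m ≤ q + 1 → q + 1 ≤ M →
      (((q : ℂ) + 1) • (1 : R) - B) * b (q + 1) = ∑ l ∈ Icc m q, α (q - l).toNat * b l)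
    (k : ℕ) (hk : m + k ≤ M) :
    (algebraMap ℂ R (m + k) - B) * b (m + k) = ∑ l ∈ range k, α (k - 1 - l) * b (m + l) := by
  have h := hrec (m + k - 1) (by omega) (by omega)
  rw [sum_Icc_sub_toNat (fun j l => α j * b l), sub_add_cancel] at h
  rw [Algebra.algebraMap_eq_smul_one, ← h]
  push_cast
  ring_nf

theorem frobeniusCoeff_of_le {k : ℕ} (h : m + k ≤ M) :
    frobeniusCoeff B α m M b k = b (m + k) := by
  rw [frobeniusCoeff, if_pos h]

theorem frobeniusCoeff_of_lt {k : ℕ} (h : M < m + k) :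
    frobeniusCoeff B α m M b k =
      resolvent B (m + k : ℂ) * ∑ l ∈ range k, α (k - 1 - l) * frobeniusCoeff B α m M b l := by
  rw [frobeniusCoeff, if_neg h.not_ge,
    ← Fin.sum_univ_eq_sum_range (fun l => α (k - 1 - l) * frobeniusCoeff B α m M b l)]

theorem isFrobeniusSeq_frobeniusCoeff
    (hunit : ∀ k : ℕ, M < m + k → IsUnit (algebraMap ℂ R (m + k) - B))
    (hb : ∀ k : ℕ, m + k ≤ M →
      (algebraMap ℂ R (m + k) - B) * b (m + k) = ∑ l ∈ range k, α (k - 1 - l) * b (m + l)) :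
    IsFrobeniusSeq B α m (frobeniusCoeff B α m M b) := by
  intro k
  rcases le_or_gt (m + k) M with hk | hk
  · rw [frobeniusCoeff_of_le hk, hb k hk]
    refine sum_congr rfl fun l hl => ?_
    rw [frobeniusCoeff_of_le (by have := mem_range.1 hl; omega)]
  · rw [frobeniusCoeff_of_lt hk, resolvent, Ring.mul_inverse_cancel_left _ _ (hunit k hk)]

end FrobeniusRecursion

section FrobeniusSeries

variable {R : Type*} [NormedRing R] [NormedAlgebra ℂ R] [CompleteSpace R]
  {B : R} {α c : ℕ → R} {m : ℤ}

theorem exists_norm_resolvent_add_natCast_le (B : R) (m : ℤ) :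
    ∃ K, ∀ k : ℕ, ‖resolvent B (m + k : ℂ)‖ ≤ K := by
  have h : Tendsto (fun k : ℕ => resolvent B (m + k : ℂ)) atTop (𝓝 0) := by
    have := (spectrum.resolvent_tendsto_cobounded B).comp <|
      (tendsto_intCast_atTop_cobounded (α := ℂ)).comp <|
        tendsto_atTop_add_const_left _ m tendsto_natCast_atTop_atTop
    simpa [Function.comp_def] using this
  obtain ⟨K, hK⟩ := isBounded_iff_forall_norm_le.1 (isBounded_range_of_tendsto _ h)
  exact ⟨K, fun k => hK _ ⟨k, rfl⟩⟩

theorem IsFrobeniusSeq.exists_norm_le_mul_pow (hc : IsFrobeniusSeq B α m c) {M : ℤ}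
    (hunit : ∀ k : ℕ, M < m + k → IsUnit (algebraMap ℂ R (m + k) - B)) {C σ : ℝ} (hσ : 0 ≤ σ)
    (hα : ∀ j, ‖α j‖ ≤ C * σ ^ j) : ∃ D τ : ℝ, 0 < τ ∧ ∀ k, ‖c k‖ ≤ D * τ ^ k := by
  obtain ⟨K, hK⟩ := exists_norm_resolvent_add_natCast_le B m
  have hK0 : 0 ≤ K := (norm_nonneg _).trans (hK 0)
  have hC : 0 ≤ C := by simpa using (norm_nonneg _).trans (hα 0)
  refine exists_le_mul_pow_of_le_convolution (N := (M - m + 1).toNat) (mul_nonneg hK0 hC) hσ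
    fun k hk => ?_
  have hck : c k = resolvent B (m + k : ℂ) * ∑ l ∈ range k, α (k - 1 - l) * c l := by
    rw [← hc k, resolvent, Ring.inverse_mul_cancel_left _ _ (hunit k (by omega))]
  calc ‖c k‖ ≤ K * ∑ l ∈ range k, ‖α (k - 1 - l)‖ * ‖c l‖ := by
        rw [hck]
        exact (norm_mul_le _ _).trans <| mul_le_mul (hK k)
          ((norm_sum_le _ _).trans (sum_le_sum fun l _ => norm_mul_le _ _)) (norm_nonneg _) hK0
    _ ≤ K * ∑ l ∈ range k, C * σ ^ (k - 1 - l) * ‖c l‖ := by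
        gcongr with l; exact hα _
    _ = K * C * ∑ l ∈ range k, σ ^ (k - 1 - l) * ‖c l‖ := by
        rw [mul_sum, mul_sum]; exact sum_congr rfl fun _ _ => by ring

theorem IsFrobeniusSeq.indicial_identity (hc : IsFrobeniusSeq B α m c) {u : ℂ}
    (hα : Summable fun j => ‖u ^ j • α j‖) (hcn : Summable fun k => ‖u ^ k • c k‖)
    (hc' : Summable fun k : ℕ => ((k : ℂ) * u ^ (k - 1)) • c k) :
    (m : ℂ) • ∑' k, u ^ k • c k + u • ∑' k : ℕ, ((k : ℂ) * u ^ (k - 1)) • c k =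
      B * ∑' k, u ^ k • c k + u • ((∑' j, u ^ j • α j) * ∑' k, u ^ k • c k) := by
  have hV := hcn.of_norm.hasSum
  have hL := ((hV.const_smul (m : ℂ)).add (hc'.hasSum.const_smul u)).congr_fun
    (g := fun k : ℕ => u ^ k • ((m + k : ℂ) • c k)) fun k => by
      rcases k with _ | k
      · simp
      · simp only [smul_smul, Nat.add_sub_cancel, ← add_smul, pow_succ]
        push_cast
        ring_nf
  set g : ℕ → R := fun k => u ^ k • ((algebraMap ℂ R (m + k) - B) * c k) with hg
  have hcauchy := ((hasSum_sum_range_mul_of_summable_norm hα hcn).const_smul u).congr_fun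
    (g := fun p => g (p + 1)) fun p => by
      rw [hg]
      dsimp only
      rw [hc (p + 1), Nat.add_sub_cancel, ← sum_range_reflect, smul_sum, smul_sum]
      refine sum_congr rfl fun j hj => ?_
      have hj : j ≤ p := Nat.lt_succ_iff.1 (mem_range.1 hj)
      rw [Nat.add_sub_cancel, Nat.sub_sub_self hj, smul_mul_smul_comm, smul_smul, ← pow_add,
        ← pow_succ', Nat.add_sub_cancel' hj]
  have hg0 : g 0 = 0 := by rw [hg]; dsimp only; rw [hc 0, sum_range_zero, smul_zero]
  have hrest := (hasSum_nat_add_iff' (f := g) 1).1 (by rwa [sum_range_one, hg0, sub_zero])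
  refine hL.unique (((hV.mul_left B).add hrest).congr_fun fun k => ?_)
  simp [hg, sub_mul, Algebra.algebraMap_eq_smul_one, smul_sub]

theorem IsFrobeniusSeq.hasDerivAt (hc : IsFrobeniusSeq B α m c) {D τ δ : ℝ}
    (hcD : ∀ k, ‖c k‖ ≤ D * τ ^ k) (hτ : 0 ≤ τ) (hδτ : δ * τ < 1) {z₀ z : ℂ}
    (hz : z ∈ ball z₀ δ) (hz₀ : z ≠ z₀) (hα : Summable fun j => ‖(z - z₀) ^ j • α j‖) :
    HasDerivAt (fun w => (w - z₀) ^ m • ∑' k, (w - z₀) ^ k • c k)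
      (((z - z₀)⁻¹ • B + ∑' j, (z - z₀) ^ j • α j) * ((z - z₀) ^ m • ∑' k, (z - z₀) ^ k • c k))
      z := by
  set u := z - z₀
  have hu : u ≠ 0 := sub_ne_zero.2 hz₀
  have hzδ : ‖u‖ < δ := mem_ball_iff_norm.1 hz
  have hδ : 0 < δ := pos_of_mem_ball hz
  have hpow : HasDerivAt (fun w => (w - z₀) ^ m) ((m : ℂ) * u ^ (m - 1)) z := by
    simpa [Function.comp_def] using
      (hasDerivAt_zpow m u (.inl hu)).comp z ((hasDerivAt_id z).sub_const z₀)
  have hid := hc.indicial_identity hα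
    (summable_norm_pow_smul_of_norm_le hcD hτ (by nlinarith [norm_nonneg u]))
    (summable_natCast_mul_pow_smul hcD hτ hδ hδτ hzδ.le)
  refine (hpow.smul (hasDerivAt_tsum_pow_smul hcD hτ hδτ hz)).congr_deriv ?_
  set V := ∑' k, u ^ k • c k
  set V' := ∑' k : ℕ, ((k : ℂ) * u ^ (k - 1)) • c k
  set Aₕ := ∑' j, u ^ j • α j
  have hm : u ^ m = u ^ (m - 1) * u := by rw [zpow_sub_one₀ hu, inv_mul_cancel_right₀ hu]
  have hm' : u⁻¹ * u ^ m = u ^ (m - 1) := by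
    rw [hm, mul_comm, mul_assoc, mul_inv_cancel₀ hu, mul_one]
  calc u ^ m • V' + ((m : ℂ) * u ^ (m - 1)) • V = u ^ (m - 1) • ((m : ℂ) • V + u • V') := by
        rw [hm]; module
    _ = u ^ (m - 1) • (B * V + u • (Aₕ * V)) := by rw [hid]
    _ = (u⁻¹ • B + Aₕ) * (u ^ m • V) := by
        rw [add_mul, smul_mul_smul_comm, hm', mul_smul_comm, hm]; module

theorem IsFrobeniusSeq.exists_ball_hasDerivAt (hc : IsFrobeniusSeq B α m c) {M : ℤ}
    (hunit : ∀ k : ℕ, M < m + k → IsUnit (algebraMap ℂ R (m + k) - B)) {s : ℂ} (hs : s ≠ 0)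
    (hαs : Summable fun j => s ^ j • α j) :
    ∃ δ, 0 < δ ∧ δ ≤ ‖s‖ ∧ ∀ z₀ z : ℂ, z ∈ ball z₀ δ → z ≠ z₀ →
      Summable (fun k => (z - z₀) ^ k • c k) ∧
      ∀ Aₕ, HasSum (fun j => (z - z₀) ^ j • α j) Aₕ →
        HasDerivAt (fun w => (w - z₀) ^ m • ∑' k, (w - z₀) ^ k • c k)
          (((z - z₀)⁻¹ • B + Aₕ) * ((z - z₀) ^ m • ∑' k, (z - z₀) ^ k • c k)) z := by
  obtain ⟨C, hC⟩ := exists_norm_le_mul_inv_pow_of_summable hs hαs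
  obtain ⟨D, τ, hτ, hcD⟩ := hc.exists_norm_le_mul_pow hunit (inv_nonneg.2 (norm_nonneg s)) hC
  have hs' : 0 < ‖s‖ := norm_pos_iff.2 hs
  set δ := min ‖s‖ (τ⁻¹ / 2)
  have hδτ : δ * τ < 1 := by
    calc δ * τ ≤ τ⁻¹ / 2 * τ := by gcongr; exact min_le_right _ _
      _ < 1 := by field_simp; norm_num
  refine ⟨δ, by positivity, min_le_left _ _, fun z₀ z hz hz₀ => ?_⟩
  have hzδ : ‖z - z₀‖ < δ := mem_ball_iff_norm.1 hz
  have hzs : ‖z - z₀‖ * ‖s‖⁻¹ < 1 := by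
    rw [← div_eq_mul_inv, div_lt_one hs']; exact hzδ.trans_le (min_le_left _ _)
  refine ⟨(summable_norm_pow_smul_of_norm_le hcD hτ.le ?_).of_norm, fun Aₕ hAₕ => ?_⟩
  · exact (mul_lt_mul_of_pos_right hzδ hτ).trans hδτ
  rw [← hAₕ.tsum_eq]
  exact hc.hasDerivAt hcD hτ.le hδτ hz hz₀
    (summable_norm_pow_smul_of_norm_le hC (by positivity) hzs)

end FrobeniusSeries

attribute [local instance] Matrix.linftyOpNormedRing Matrix.linftyOpNormedAlgebra

theorem laurent_solution_exists_general (n : ℕ) (z₀ : ℂ) (r : ℝ) (hr : 0 < r) (ρ : ℂ)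
    (am1 : Matrix (Fin n) (Fin n) ℂ) (a : ℕ → Matrix (Fin n) (Fin n) ℂ)
    (A : ℂ → Matrix (Fin n) (Fin n) ℂ)
    (hA : ∀ z : ℂ, z ≠ z₀ → ‖z - z₀‖ < r → ∀ i j,
      HasSum (fun p : ℕ => a p i j * (z - z₀) ^ p) (A z i j - am1 i j / (z - z₀)))
    (m M : ℤ)
    (hnoeig : ∀ q : ℤ, M < q →
      Matrix.det ((q : ℂ) • (1 : Matrix (Fin n) (Fin n) ℂ) - ρ • am1) ≠ 0)
    (b : ℤ → Matrix (Fin n) (Fin n) ℂ)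
    (hrec : ∀ q : ℤ, m ≤ q + 1 → q + 1 ≤ M →
      (((q : ℂ) + 1) • (1 : Matrix (Fin n) (Fin n) ℂ) - ρ • am1) * b (q + 1)
        = ∑ l ∈ Finset.Icc m q, ρ • (a (q - l).toNat * b l)) :
    ∃ (c : ℤ → Matrix (Fin n) (Fin n) ℂ) (r' : ℝ) (W : ℂ → Matrix (Fin n) (Fin n) ℂ),
      (∀ p : ℤ, m ≤ p → p ≤ M → c p = b p) ∧ 0 < r' ∧ r' ≤ r ∧
      (∀ z : ℂ, z ≠ z₀ → ‖z - z₀‖ < r' →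
        (∀ i j, HasSum (fun p : ℕ => c (m + p) i j * (z - z₀) ^ (m + (p : ℤ))) (W z i j)) ∧
        (∀ i j, HasDerivAt (fun w => W w i j) ((ρ • (A z * W z)) i j) z)) := by
  have hAₕ : ∀ z, z ≠ z₀ → ‖z - z₀‖ < r →
      HasSum (fun j => (z - z₀) ^ j • (ρ • a j)) (ρ • A z - (z - z₀)⁻¹ • (ρ • am1)) := by
    intro z hz hzr
    have h : HasSum (fun j => (z - z₀) ^ j • a j) (A z - (z - z₀)⁻¹ • am1) :=
      Pi.hasSum.2 fun i => Pi.hasSum.2 fun j => by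
        simpa [mul_comm, div_eq_inv_mul] using hA z hz hzr i j
    simpa [smul_sub, smul_comm ρ] using h.const_smul ρ
  have hunit : ∀ k : ℕ, M < m + k → IsUnit (algebraMap ℂ _ (m + k) - ρ • am1) := fun k hk => by
    rw [Algebra.algebraMap_eq_smul_one, Matrix.isUnit_iff_isUnit_det, isUnit_iff_ne_zero]
    exact_mod_cast hnoeig (m + k) hk
  have hb : ∀ k : ℕ, m + k ≤ M → (algebraMap ℂ _ (m + k) - ρ • am1) * b (m + k) =
      ∑ l ∈ range k, (ρ • a (k - 1 - l)) * b (m + l) :=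
    frobenius_recursion_of_sum_Icc (B := ρ • am1) (α := fun j => ρ • a j) (b := b)
      (by simpa only [smul_mul_assoc] using hrec)
  have hc := isFrobeniusSeq_frobeniusCoeff (α := fun j => ρ • a j) hunit hb
  have hs : ‖z₀ + r / 2 - z₀‖ < r := by simp [abs_of_pos hr, hr]
  obtain ⟨r', hr', hr's, hsol⟩ := hc.exists_ball_hasDerivAt hunit (by simp [hr.ne'])
    (hAₕ (z₀ + r / 2) (by simp [hr.ne']) hs).summable
  set c := frobeniusCoeff (ρ • am1) (fun j => ρ • a j) m M b with hc_def
  refine ⟨fun p => if m ≤ p then c (p - m).toNat else 0, r',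
    fun z => (z - z₀) ^ m • ∑' k, (z - z₀) ^ k • c k, fun p hmp hpM => ?_, hr',
    (hr's.trans hs.le), fun z hz hzr => ?_⟩
  · dsimp only
    rw [if_pos hmp, hc_def, frobeniusCoeff_of_le (show m + ((p - m).toNat : ℤ) ≤ M by omega),
      show m + ((p - m).toNat : ℤ) = p by omega]
  obtain ⟨hsum, hderiv⟩ := hsol z₀ z (mem_ball_iff_norm.2 hzr) hz
  have hderiv := hderiv _ (hAₕ z hz (hzr.trans (hr's.trans_lt hs)))
  rw [add_sub_cancel] at hderiv
  refine ⟨fun i j => ?_, fun i j => ?_⟩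
  · refine (Pi.hasSum.1 (Pi.hasSum.1 (hsum.hasSum.const_smul ((z - z₀) ^ m)) i) j).congr_fun
      fun p => ?_
    simp only [le_add_iff_nonneg_right, Nat.cast_nonneg, ↓reduceIte, add_sub_cancel_left,
      Int.toNat_natCast, zpow_add₀ (sub_ne_zero.2 hz), zpow_natCast, Matrix.smul_apply, smul_eq_mul]
    ring
  · refine ((LinearMap.toContinuousLinearMap (entryLinearMap ℂ ℂ i j)).hasFDerivAt
      |>.comp_hasDerivAt z hderiv).congr_deriv ?_
    exact congrFun (congrFun (smul_mul_assoc ρ (A z) _) i) j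

/-- Sufficient condition: let `A` have a simple pole at `z₀` with residue `a₋₁` and
analytic part converging for `|z-z₀| < r`.  Let `m ≤ M` be integers with `M` an
eigenvalue of `ρ·a₋₁` and no integer `q > M` an eigenvalue of `ρ·a₋₁`.  If matrices
`b_m, …, b_M` (given as `b : ℤ → M_n(ℂ)`) with `b m ≠ 0` satisfy the recursion
`((q+1)·I - ρ·a₋₁)·b_{q+1} = Σ_{j+ℓ=q, j≥0, ℓ≥m} ρ·a_j·b_ℓ` for `m ≤ q+1 ≤ M`,
then the coefficients extend to a Laurent-type solution
`W(z) = Σ_{p≥m} c_p (z-z₀)^p` of `W' = ρ·A·W` convergent on `0 < |z-z₀| < r'`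
for some `0 < r' ≤ r`.  All derivatives and series are entrywise. -/
theorem laurent_solution_exists (n : ℕ) (z₀ : ℂ) (r : ℝ) (hr : 0 < r) (ρ : ℂ)
    (am1 : Matrix (Fin n) (Fin n) ℂ) (a : ℕ → Matrix (Fin n) (Fin n) ℂ)
    (A : ℂ → Matrix (Fin n) (Fin n) ℂ)
    (hA : ∀ z : ℂ, z ≠ z₀ → ‖z - z₀‖ < r → ∀ i j,
      HasSum (fun p : ℕ => a p i j * (z - z₀) ^ p) (A z i j - am1 i j / (z - z₀)))
    (m M : ℤ) (hmM : m ≤ M)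
    (hMeig : Matrix.det ((M : ℂ) • (1 : Matrix (Fin n) (Fin n) ℂ) - ρ • am1) = 0)
    (hnoeig : ∀ q : ℤ, M < q →
      Matrix.det ((q : ℂ) • (1 : Matrix (Fin n) (Fin n) ℂ) - ρ • am1) ≠ 0)
    (b : ℤ → Matrix (Fin n) (Fin n) ℂ) (hb : b m ≠ 0)
    (hrec : ∀ q : ℤ, m ≤ q + 1 → q + 1 ≤ M →
      (((q : ℂ) + 1) • (1 : Matrix (Fin n) (Fin n) ℂ) - ρ • am1) * b (q + 1)
        = ∑ l ∈ Finset.Icc m q, ρ • (a (q - l).toNat * b l)) :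
    ∃ (c : ℤ → Matrix (Fin n) (Fin n) ℂ) (r' : ℝ) (W : ℂ → Matrix (Fin n) (Fin n) ℂ),
      (∀ p : ℤ, m ≤ p → p ≤ M → c p = b p) ∧ 0 < r' ∧ r' ≤ r ∧
      (∀ z : ℂ, z ≠ z₀ → ‖z - z₀‖ < r' →
        (∀ i j, HasSum (fun p : ℕ => c (m + p) i j * (z - z₀) ^ (m + (p : ℤ))) (W z i j)) ∧
        (∀ i j, HasDerivAt (fun w => W w i j) ((ρ • (A z * W z)) i j) z)) :=
  laurent_solution_exists_general n z₀ r hr ρ am1 a A hA m M hnoeig b hrec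
end

section
/- Let n ≥ 3 and let z_1, …, z_{n−1} be pairwise distinct complex numbers. Let a_1, …, a_{n−1} ∈ ℂ satisfy a_1 + ⋯ + a_{n−1} = 0 with not all a_i zero. Define vectors G_p ∈ ℂ^n for 1 ≤ p ≤ n−1 by: G_p = 0 for 1 ≤ p ≤ n−3; G_{n−2} = (0, a_1, …, a_{n−1}); and G_{n−1} = (m/(n(n−1)))·(n−1, −1, …, −1) + (0, b_1, …, b_{n−1}), where m = Σ_{i=1}^{n−1} a_i z_i and b_k = a_k·Σ_{i≠k} z_i + m/(n−1). Let L_1, …, L_{n−1} ∈ ℂ^n be the unique vectors satisfying Σ_{k=1}^{n−1} z_k^{p−1}·L_k = G_p for p = 1, …, n−1. Then the vector function Y(z) = Σ_{k=1}^{n−1} L_k/(z−z_k) is not identically zero and satisfies Y′(z) = −A(z)·Y(z) for all z ∈ ℂ ∖ {z_1, …, z_{n−1}}. -/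
open Matrix

/-- A(z) = Σ_{k=1}^{n-1} P_k / (z - z_k). -/
noncomputable def Amat (n : ℕ) [NeZero n] (z : Fin (n - 1) → ℂ) (w : ℂ) :
    Matrix (Fin n) (Fin n) ℂ :=
  ∑ k : Fin (n - 1), (w - z k)⁻¹ • Pk n k

/-- The vector v₃ = (n-1, -1, ..., -1). -/
noncomputable def v3 (n : ℕ) [NeZero n] : Fin n → ℂ :=
  fun i => if i = 0 then (n : ℂ) - 1 else -1

/-- The vector (0, c₁, …, c_{n-1}) ∈ ℂⁿ obtained from c : ℂ^{n-1}. -/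
noncomputable def pad0 (n : ℕ) (c : Fin (n - 1) → ℂ) : Fin n → ℂ :=
  fun i => if h : i.1 = 0 then 0 else c ⟨i.1 - 1, by have := i.2; omega⟩

/-- m = Σ_i a_i z_i. -/
noncomputable def mval (n : ℕ) (z a : Fin (n - 1) → ℂ) : ℂ :=
  ∑ i : Fin (n - 1), a i * z i

/-- b_k = a_k · Σ_{i≠k} z_i + m/(n-1). -/
noncomputable def bval (n : ℕ) (z a : Fin (n - 1) → ℂ) (k : Fin (n - 1)) : ℂ :=
  a k * (∑ i ∈ Finset.univ.erase k, z i) + mval n z a / ((n : ℂ) - 1)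

/-- The G_p vectors (p : Fin (n-1) represents the 1-based index p+1 ∈ {1,…,n-1}):
G_p = 0 for 1 ≤ p ≤ n-3, G_{n-2} = (0, a₁, …, a_{n-1}),
G_{n-1} = (m/(n(n-1)))·v₃ + (0, b₁, …, b_{n-1}). -/
noncomputable def Gvec (n : ℕ) [NeZero n] (z a : Fin (n - 1) → ℂ) (p : Fin (n - 1)) :
    Fin n → ℂ :=
  if p.1 = n - 2 then
    (mval n z a / ((n : ℂ) * ((n : ℂ) - 1))) • v3 n + pad0 n (bval n z a)
  else if p.1 = n - 3 then pad0 n a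
  else 0

/-!
The moment conditions determine `Y` without solving for the `L_k`. With `Q(u) = ∏ (u - z_k)`,
the quotient `Q(u) / (u - z_k)` is a polynomial in `z_k` with top coefficients `1` and
`u - Σ z`; as the moments `G_p` vanish for `p ≤ n - 3`,
`Q(u) Y(u) = (u - Σ z) G_{n-2} + G_{n-1} = y(u)`, where
`y(u) = (μ, μ + a_1 (u - z_1), …, μ + a_{n-1} (u - z_{n-1}))` and `μ = m / n`. For `Y = Q⁻¹ y` the equation `Y' = -A Y` becomes
`y' = Σ_k (y - P_k y) / (u - z_k)`, which holds because `y - P_k y = a_k (u - z_k) (e_{k+1} - e_1)`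
and `Σ a_k = 0`. Since some `a_j ≠ 0`, the affine numerator `y` is not identically zero.
-/

open Finset Polynomial Filter Topology

section MomentFormula

variable {K E ι : Type*} [Field K] [AddCommGroup E] [Module K E] [Fintype ι]

theorem Polynomial.eval_div_sub_of_isRoot (Q : K[X]) {u z : K} (hz : Q.IsRoot z) (hu : u ≠ z) :
    Q.eval u / (u - z) =
      ∑ r ∈ range (Q.natDegree + 1), Q.coeff r * ∑ p ∈ range r, z ^ p * u ^ (r - 1 - p) := by
  rw [div_eq_iff (sub_ne_zero.mpr hu), sum_mul]
  calc Q.eval u = Q.eval u - Q.eval z := by rw [hz.eq_zero, sub_zero]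
    _ = _ := by
      rw [eval_eq_sum_range, eval_eq_sum_range, ← sum_sub_distrib]
      refine sum_congr rfl fun r _ => ?_
      linear_combination Q.coeff r * geom_sum₂_mul z u r

theorem eval_smul_sum_inv_smul (Q : K[X]) (z : ι → K) (hQ : ∀ k, Q.IsRoot (z k)) (L : ι → E)
    {u : K} (hu : ∀ k, u ≠ z k) :
    Q.eval u • ∑ k, (u - z k)⁻¹ • L k =
      ∑ r ∈ range (Q.natDegree + 1),
        Q.coeff r • ∑ p ∈ range r, u ^ (r - 1 - p) • ∑ k, z k ^ p • L k := by
  simp_rw [smul_sum, smul_smul, ← div_eq_mul_inv, Q.eval_div_sub_of_isRoot (hQ _) (hu _),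
    sum_smul, mul_sum]
  rw [sum_comm]
  refine sum_congr rfl fun r _ => ?_
  refine (sum_comm.trans (sum_congr rfl fun k _ => ?_)).symm
  rw [sum_smul]
  exact sum_congr rfl fun p _ => by rw [mul_comm (u ^ _)]

theorem sum_coeff_smul_sum_pow_smul_of_monic (Q : K[X]) (hQ : Q.Monic) {d : ℕ}
    (hdeg : Q.natDegree = d + 2) (M : ℕ → E) (hM : ∀ p < d, M p = 0) (u : K) :
    ∑ r ∈ range (Q.natDegree + 1), Q.coeff r • ∑ p ∈ range r, u ^ (r - 1 - p) • M p =
      (u + Q.coeff (d + 1)) • M d + M (d + 1) := by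
  have hlow : ∀ (f : ℕ → K), ∀ r ≤ d, ∑ p ∈ range r, f p • M p = 0 := fun f r hr =>
    sum_eq_zero fun p hp => by rw [hM p ((mem_range.mp hp).trans_le hr), smul_zero]
  have hlead : Q.coeff (d + 2) = 1 := hdeg ▸ hQ.coeff_natDegree
  rw [hdeg, sum_range_succ, sum_range_succ,
    sum_eq_zero fun r hr => by rw [hlow _ r (Nat.le_of_lt_succ (mem_range.mp hr)), smul_zero],
    hlead]
  simp only [sum_range_succ, hlow _ d le_rfl, Nat.sub_self, show d + 2 - 1 - d = 1 by omega,
    show d + 2 - 1 - (d + 1) = 0 by omega, Nat.add_sub_cancel, pow_zero, pow_one, one_smul,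
    zero_add, add_smul]
  abel

theorem prod_sub_smul_sum_inv_smul (z : ι → K) {d : ℕ} (hcard : Fintype.card ι = d + 2)
    (L : ι → E) (hL : ∀ p < d, ∑ k, z k ^ p • L k = 0) {u : K} (hu : ∀ k, u ≠ z k) :
    (∏ k, (u - z k)) • ∑ k, (u - z k)⁻¹ • L k =
      (u - ∑ k, z k) • ∑ k, z k ^ d • L k + ∑ k, z k ^ (d + 1) • L k := by
  classical
  have hcard' : #(univ : Finset ι) = d + 2 := by rw [card_univ, hcard]
  have hsub : (Lagrange.nodal univ z).coeff (d + 1) = -∑ k, z k := by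
    rw [Lagrange.nodal_eq, show d + 1 = #(univ : Finset ι) - 1 by omega]
    exact prod_X_sub_C_coeff_card_pred _ _ (by omega)
  rw [← Lagrange.eval_nodal, eval_smul_sum_inv_smul _ z
      (fun k => Lagrange.eval_nodal_at_node (mem_univ k)) L hu,
    sum_coeff_smul_sum_pow_smul_of_monic _ Lagrange.nodal_monic
      (by rw [Lagrange.natDegree_nodal, hcard']) _ hL, hsub, sub_eq_add_neg]

end MomentFormula

section Transpositions

variable {n : ℕ}

theorem permP_mulVec_apply (a b : Fin n) (v : Fin n → ℂ) (i : Fin n) :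
    (permP n a b *ᵥ v) i = v (Equiv.swap a b i) := by
  simp [permP, mulVec, dotProduct, eq_comm (a := i), Equiv.swap_apply_eq_iff]

def succIdx (n : ℕ) (k : Fin (n - 1)) : Fin n := ⟨k.1 + 1, by omega⟩

theorem Pk_eq_permP [NeZero n] (k : Fin (n - 1)) : Pk n k = permP n 0 (succIdx n k) := rfl

theorem succIdx_injective : Function.Injective (succIdx n) := fun j k h => by
  simpa [succIdx, Fin.ext_iff] using h

theorem succIdx_ne_zero [NeZero n] (k : Fin (n - 1)) : succIdx n k ≠ 0 := by
  simp [succIdx, Fin.ext_iff]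

theorem eq_zero_or_eq_succIdx [NeZero n] (i : Fin n) : i = 0 ∨ ∃ k, i = succIdx n k := by
  by_cases h : i.1 = 0
  · exact Or.inl (Fin.ext h)
  · exact Or.inr ⟨⟨i.1 - 1, by omega⟩, Fin.ext (by simp only [succIdx]; omega)⟩

theorem pad0_zero [NeZero n] (c : Fin (n - 1) → ℂ) : pad0 n c 0 = 0 := by
  simp [pad0]

theorem pad0_succIdx (c : Fin (n - 1) → ℂ) (k : Fin (n - 1)) : pad0 n c (succIdx n k) = c k := by
  simp [pad0, succIdx]

theorem Amat_mulVec_apply [NeZero n] (z : Fin (n - 1) → ℂ) (w : ℂ) (v : Fin n → ℂ) (i : Fin n) :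
    (Amat n z w *ᵥ v) i = ∑ k, (w - z k)⁻¹ * v (Equiv.swap 0 (succIdx n k) i) := by
  simp [Amat, sum_mulVec, smul_mulVec, Pk_eq_permP, permP_mulVec_apply]

end Transpositions

theorem hasDerivAt_inv_prod_sub {ι 𝕜 : Type*} [Fintype ι] [NontriviallyNormedField 𝕜]
    (z : ι → 𝕜) {w : 𝕜} (hw : ∀ k, w ≠ z k) :
    HasDerivAt (fun u => (∏ k, (u - z k))⁻¹) (-(∑ k, (w - z k)⁻¹) * (∏ k, (w - z k))⁻¹) w := by
  classical
  have hsub : ∀ k, w - z k ≠ 0 := fun k => sub_ne_zero.mpr (hw k)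
  have hQ : ∏ k, (w - z k) ≠ 0 := prod_ne_zero_iff.mpr fun k _ => hsub k
  have hprod : HasDerivAt (fun u => ∏ k, (u - z k)) (∑ k, ∏ j ∈ univ.erase k, (w - z j)) w := by
    simpa using HasDerivAt.fun_finsetProd fun k _ => (hasDerivAt_id w).sub_const (z k)
  refine (hprod.inv hQ).congr_deriv ?_
  have herase : ∀ k, ∏ j ∈ univ.erase k, (w - z j) = (∏ j, (w - z j)) * (w - z k)⁻¹ := fun k =>
    by rw [← mul_prod_erase univ (fun j => w - z j) (mem_univ k)]; field_simp [hsub k]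
  rw [sum_congr rfl fun k _ => herase k, ← mul_sum]
  field_simp

noncomputable def rationalSolNum (n : ℕ) (z a : Fin (n - 1) → ℂ) (μ u : ℂ) : Fin n → ℂ :=
  fun i => μ + pad0 n (fun k => a k * (u - z k)) i

noncomputable def rationalSol (n : ℕ) (z a : Fin (n - 1) → ℂ) (μ u : ℂ) : Fin n → ℂ :=
  (∏ k, (u - z k))⁻¹ • rationalSolNum n z a μ u

section RationalSolution

variable {n : ℕ} (z a : Fin (n - 1) → ℂ)

theorem sum_inv_mul_rationalSolNum_sub_swap [NeZero n] (ha : ∑ k, a k = 0) (μ : ℂ) {w : ℂ}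
    (hw : ∀ k, w ≠ z k) (i : Fin n) :
    ∑ k, (w - z k)⁻¹ * (rationalSolNum n z a μ w i -
      rationalSolNum n z a μ w (Equiv.swap 0 (succIdx n k) i)) = pad0 n a i := by
  have hsub : ∀ k, w - z k ≠ 0 := fun k => sub_ne_zero.mpr (hw k)
  rcases eq_zero_or_eq_succIdx i with rfl | ⟨j, rfl⟩
  · simp only [rationalSolNum, Equiv.swap_apply_left, pad0_zero, pad0_succIdx]
    calc ∑ k, (w - z k)⁻¹ * (μ + 0 - (μ + a k * (w - z k))) = -∑ k, a k := by
          rw [← sum_neg_distrib]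
          exact sum_congr rfl fun k _ => by field_simp [hsub k]; ring
      _ = 0 := by rw [ha, neg_zero]
  · rw [sum_eq_single j]
    · simp only [rationalSolNum, Equiv.swap_apply_right, pad0_zero, pad0_succIdx]
      field_simp [hsub j]
      ring
    · intro k _ hkj
      rw [Equiv.swap_apply_of_ne_of_ne (succIdx_ne_zero j) (succIdx_injective.ne (Ne.symm hkj)),
        sub_self, mul_zero]
    · exact fun hj => absurd (mem_univ j) hj

theorem hasDerivAt_rationalSolNum [NeZero n] (μ w : ℂ) (i : Fin n) :
    HasDerivAt (fun u => rationalSolNum n z a μ u i) (pad0 n a i) w := by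
  rcases eq_zero_or_eq_succIdx i with rfl | ⟨j, rfl⟩
  · simp only [rationalSolNum, pad0_zero]
    exact hasDerivAt_const w _
  · simp only [rationalSolNum, pad0_succIdx]
    simpa using (((hasDerivAt_id w).sub_const (z j)).const_mul (a j)).const_add μ

theorem hasDerivAt_rationalSol [NeZero n] (ha : ∑ k, a k = 0) (μ : ℂ) {w : ℂ}
    (hw : ∀ k, w ≠ z k) (i : Fin n) :
    HasDerivAt (fun u => rationalSol n z a μ u i) (-(Amat n z w *ᵥ rationalSol n z a μ w) i) w := by
  refine ((hasDerivAt_inv_prod_sub z hw).mul (hasDerivAt_rationalSolNum z a μ w i)).congr_deriv ?_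
  rw [Amat_mulVec_apply, ← sum_inv_mul_rationalSolNum_sub_swap z a ha μ hw i]
  simp only [rationalSol, Pi.smul_apply, smul_eq_mul, neg_mul, sum_mul, mul_sum,
    ← sum_neg_distrib, ← sum_add_distrib]
  exact sum_congr rfl fun k _ => by ring

theorem exists_rationalSol_ne_zero (ha0 : a ≠ 0) (μ : ℂ) :
    ∃ w, (∀ k, w ≠ z k) ∧ rationalSol n z a μ w ≠ 0 := by
  obtain ⟨j, hj⟩ : ∃ j, a j ≠ 0 := Function.ne_iff.mp ha0
  obtain ⟨w, hw⟩ := Infinite.exists_notMem_finset (insert (z j - μ / a j) (univ.image z))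
  simp only [mem_insert, mem_image, mem_univ, true_and, not_or, not_exists] at hw
  have hwz : ∀ k, w ≠ z k := fun k h => hw.2 k h.symm
  refine ⟨w, hwz, fun h => ?_⟩
  have hQ : ∏ k, (w - z k) ≠ 0 := prod_ne_zero_iff.mpr fun k _ => sub_ne_zero.mpr (hwz k)
  have hnum : μ + a j * (w - z j) ≠ 0 := fun h0 => hw.1 (by field_simp; linear_combination h0)
  have := congrFun h (succIdx n j)
  simp only [rationalSol, rationalSolNum, Pi.smul_apply, smul_eq_mul, pad0_succIdx,
    Pi.zero_apply] at this
  exact mul_ne_zero (inv_ne_zero hQ) hnum this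

end RationalSolution

theorem sum_inv_smul_eq_rationalSol {n : ℕ} [NeZero n] (hn : 3 ≤ n) (z a : Fin (n - 1) → ℂ)
    (L : Fin (n - 1) → Fin n → ℂ)
    (hL : ∀ p : Fin (n - 1), ∑ k : Fin (n - 1), z k ^ p.1 • L k = Gvec n z a p)
    {u : ℂ} (hu : ∀ k, u ≠ z k) :
    ∑ k, (u - z k)⁻¹ • L k = rationalSol n z a (mval n z a / n) u := by
  have hcard : Fintype.card (Fin (n - 1)) = n - 3 + 2 := by rw [Fintype.card_fin]; omega
  have hlow : ∀ p < n - 3, ∑ k, z k ^ p • L k = 0 := fun p hp =>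
    (hL ⟨p, by omega⟩).trans (by
      rw [Gvec, if_neg (show p ≠ n - 2 by omega), if_neg (show p ≠ n - 3 by omega)])
  have hsub : ∑ k, z k ^ (n - 3) • L k = pad0 n a :=
    (hL ⟨n - 3, by omega⟩).trans (by rw [Gvec, if_neg (show n - 3 ≠ n - 2 by omega), if_pos rfl])
  have htop : ∑ k, z k ^ (n - 3 + 1) • L k =
      (mval n z a / ((n : ℂ) * ((n : ℂ) - 1))) • v3 n + pad0 n (bval n z a) :=
    (hL ⟨n - 3 + 1, by omega⟩).trans (by rw [Gvec, if_pos (show n - 3 + 1 = n - 2 by omega)])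
  have hQ : ∏ k, (u - z k) ≠ 0 := prod_ne_zero_iff.mpr fun k _ => sub_ne_zero.mpr (hu k)
  have hn0 : (n : ℂ) ≠ 0 := Nat.cast_ne_zero.mpr (by omega)
  have hn1 : (n : ℂ) - 1 ≠ 0 := by
    rw [sub_ne_zero, ← Nat.cast_one, Ne, Nat.cast_inj]; omega
  rw [rationalSol, eq_inv_smul_iff₀ hQ, prod_sub_smul_sum_inv_smul z hcard L hlow hu, hsub, htop]
  funext i
  rcases eq_zero_or_eq_succIdx i with rfl | ⟨j, rfl⟩
  · simp only [rationalSolNum, Pi.add_apply, Pi.smul_apply, pad0_zero, v3, smul_eq_mul,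
      ↓reduceIte, mul_zero, add_zero, zero_add]
    field_simp
  · simp only [rationalSolNum, Pi.add_apply, Pi.smul_apply, pad0_succIdx, v3, smul_eq_mul,
      if_neg (succIdx_ne_zero j), bval, sum_erase_eq_sub (mem_univ j)]
    field_simp
    ring

theorem rational_solutions_Yj_general (n : ℕ) [NeZero n] (hn : 3 ≤ n)
    (z : Fin (n - 1) → ℂ)
    (a : Fin (n - 1) → ℂ) (ha : ∑ i : Fin (n - 1), a i = 0) (ha0 : a ≠ 0)
    (L : Fin (n - 1) → Fin n → ℂ)
    (hL : ∀ p : Fin (n - 1), ∑ k : Fin (n - 1), z k ^ p.1 • L k = Gvec n z a p)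
    (Y : ℂ → Fin n → ℂ)
    (hY : ∀ u : ℂ, Y u = ∑ k : Fin (n - 1), (u - z k)⁻¹ • L k) :
    (∃ w : ℂ, (∀ k, w ≠ z k) ∧ Y w ≠ 0) ∧
    (∀ w : ℂ, (∀ k, w ≠ z k) → ∀ i,
      HasDerivAt (fun u => Y u i) (-(Amat n z w *ᵥ Y w) i) w) := by
  have hYsol : ∀ u, (∀ k, u ≠ z k) → Y u = rationalSol n z a (mval n z a / n) u :=
    fun u hu => (hY u).trans (sum_inv_smul_eq_rationalSol hn z a L hL hu)
  refine ⟨?_, fun w hw i => ?_⟩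
  · obtain ⟨w, hw, hne⟩ := exists_rationalSol_ne_zero z a ha0 (mval n z a / n)
    exact ⟨w, hw, by rwa [hYsol w hw]⟩
  · have hnear : ∀ᶠ u in 𝓝 w, ∀ k, u ≠ z k :=
      eventually_all.mpr fun k => eventually_ne_nhds (hw k)
    rw [hYsol w hw]
    exact (hasDerivAt_rationalSol z a ha _ hw i).congr_of_eventuallyEq
      (hnear.mono fun u hu => congrFun (hYsol u hu) i)

/-- Given a₁ + ⋯ + a_{n-1} = 0 (not all zero) and L₁,…,L_{n-1} the (unique) solutions of
Σ_k z_k^{p-1}·L_k = G_p (p = 1,…,n-1), the function Y(z) = Σ_k L_k/(z-z_k) is a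
not-identically-zero rational solution of Y' = -A(z)·Y. -/
theorem rational_solutions_Yj (n : ℕ) [NeZero n] (hn : 3 ≤ n)
    (z : Fin (n - 1) → ℂ) (hz : Function.Injective z)
    (a : Fin (n - 1) → ℂ) (ha : ∑ i : Fin (n - 1), a i = 0) (ha0 : a ≠ 0)
    (L : Fin (n - 1) → Fin n → ℂ)
    (hL : ∀ p : Fin (n - 1), ∑ k : Fin (n - 1), z k ^ p.1 • L k = Gvec n z a p)
    (Y : ℂ → Fin n → ℂ)
    (hY : ∀ u : ℂ, Y u = ∑ k : Fin (n - 1), (u - z k)⁻¹ • L k) :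
    (∃ w : ℂ, (∀ k, w ≠ z k) ∧ Y w ≠ 0) ∧
    (∀ w : ℂ, (∀ k, w ≠ z k) → ∀ i,
      HasDerivAt (fun u => Y u i) (-(Amat n z w *ᵥ Y w) i) w) :=
  rational_solutions_Yj_general n hn z a ha ha0 L hL Y hY
end

section
/- Let n ≥ 3 and let z_1, …, z_{n−1} be pairwise distinct complex numbers. Let v₃ = (n−1, −1, …, −1) ∈ ℂ^n, and for 1 ≤ i ≤ n−1 let N_i ∈ ℂ^n be the vector with (N_i)_1 = (N_i)_{i+1} = 1 and (N_i)_j = −2/(n−2) for all j ∉ {1, i+1}. Then there exist vectors L_1, …, L_{n−1} ∈ ℂ^n such that the vector function Y(z) = Σ_{k=1}^{n−1} L_k/(z−z_k) + z·v₃ − Σ_{i=1}^{n−1} z_i·N_i satisfies Y′(z) = −A(z)·Y(z) for all z ∈ ℂ ∖ {z_1, …, z_{n−1}}. -/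
open Matrix

/-- N_i : entries 1 at positions 1 and i+1 (1-based), and -2/(n-2) elsewhere. -/
noncomputable def Nvec (n : ℕ) (i : Fin (n - 1)) : Fin n → ℂ :=
  fun j => if j.1 = 0 ∨ j.1 = i.1 + 1 then 1 else -2 / ((n : ℂ) - 2)

/-!
Away from the poles write `Y = T / Φ` with `Φ = ∏ₖ (X - z k)` and polynomial numerators `T i`.
The transpositions `(0, k + 1)` form a star with hub `0`, and `Y' = -A Y` becomes
`(X - z k) T'_{k+1} = T_{k+1} - T₀` for every leaf together with `T₀' + ∑ₖ T'_{k+1} = 0`.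
Take `T₀` an antiderivative of `(n - 1) n Φ`. Since `T₀'` vanishes at every `z k`, each leaf
equation has a polynomial solution (after translating `z k` to `0` it is solved coefficientwise).
Differentiating the leaf equations shows that `T₀' + ∑ₖ T'_{k+1}` is constant, and adding
multiples of `X - z k` to the leaf numerators makes it vanish. The equations also force the top
two coefficients of every `T i`, which give the linear part `u v₃ - ∑ z_i N_i` of the partial
fraction expansion of `T i / Φ`; its residues are the `L k`.
-/

open Polynomial Finset Lagrange

namespace Polynomial

theorem exists_coeff_eq_mul_coeff {R : Type*} [Semiring R] (p : R[X]) (g : ℕ → R) :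
    ∃ q : R[X], ∀ t, q.coeff t = g t * p.coeff t := by
  classical
  refine ⟨∑ t ∈ p.support, monomial t (g t * p.coeff t), fun t => ?_⟩
  rw [finsetSum_coeff, sum_eq_single t (fun b _ hb => coeff_monomial_of_ne _ hb.symm)]
  · simp
  · simp_all

section CommRing

variable {R : Type*} [CommRing R]

theorem coeff_X_mul_derivative (p : R[X]) (t : ℕ) :
    (X * derivative p).coeff t = t * p.coeff t := by
  cases t with
  | zero => simp
  | succ t => rw [coeff_X_mul, coeff_derivative]; push_cast; ring

theorem coeff_of_X_sub_C_mul_derivative_eq {p q : R[X]} {a : R}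
    (h : (X - C a) * derivative q = q - p) (t : ℕ) :
    ((t : R) - 1) * q.coeff t = a * (t + 1) * q.coeff (t + 1) - p.coeff t := by
  have := congrArg (coeff · t) h
  simp only [sub_mul, coeff_sub, coeff_X_mul_derivative, coeff_C_mul, coeff_derivative] at this
  linear_combination this

theorem X_sub_C_mul_derivative_derivative {p q : R[X]} {a : R}
    (h : (X - C a) * derivative q = q - p) :
    (X - C a) * derivative (derivative q) = -derivative p := by
  have := congrArg derivative h
  rw [derivative_mul, derivative_X_sub_C, one_mul, derivative_sub] at this
  linear_combination this

theorem degree_sub_linear_mul_lt {f g : R[X]} {k : ℕ} (hg : g.Monic) (hgk : g.natDegree = k + 1)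
    (hf : f.natDegree ≤ k + 2) :
    (f - (C (f.coeff (k + 2)) * X + C (f.coeff (k + 1) - f.coeff (k + 2) * g.coeff k)) * g).degree
      < ↑(k + 1) := by
  have hcoeff (t : ℕ) : ((C (f.coeff (k + 2)) * X
      + C (f.coeff (k + 1) - f.coeff (k + 2) * g.coeff k)) * g).coeff (t + 1)
      = f.coeff (k + 2) * g.coeff t
        + (f.coeff (k + 1) - f.coeff (k + 2) * g.coeff k) * g.coeff (t + 1) := by
    rw [add_mul, coeff_add, mul_assoc, coeff_C_mul, coeff_C_mul, mul_comm X, coeff_mul_X]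
  have hlead : g.coeff (k + 1) = 1 := hgk ▸ hg.coeff_natDegree
  have hg0 (t : ℕ) (ht : k + 1 < t) : g.coeff t = 0 := coeff_eq_zero_of_natDegree_lt (hgk ▸ ht)
  rw [degree_lt_iff_coeff_zero]
  intro t ht
  obtain ⟨t, rfl⟩ : ∃ s, t = s + 1 := ⟨t - 1, by omega⟩
  rw [coeff_sub, hcoeff]
  rcases (by omega : t = k ∨ t = k + 1 ∨ k + 1 < t) with rfl | rfl | ht
  · rw [hlead]; ring
  · rw [hlead, hg0 (k + 2) (by omega)]; ring
  · rw [coeff_eq_zero_of_natDegree_lt (n := t + 1) (by omega), hg0 t ht, hg0 (t + 1) (by omega)]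
    ring

end CommRing

section CharZero

variable {K : Type*} [Field K] [CharZero K]

theorem exists_derivative_eq (p : K[X]) : ∃ q : K[X], derivative q = p := by
  obtain ⟨q, hq⟩ := exists_coeff_eq_mul_coeff p fun t => ((t : K) + 1)⁻¹
  refine ⟨X * q, ext fun t => ?_⟩
  rw [coeff_derivative, coeff_X_mul, hq, mul_right_comm,
    inv_mul_cancel₀ (Nat.cast_add_one_ne_zero t), one_mul]

theorem exists_X_mul_derivative_eq (p : K[X]) (hp : p.coeff 1 = 0) :
    ∃ q : K[X], X * derivative q = q - p := by
  -- At `t = 1` the junk value `(1 - 1)⁻¹ = 0` is harmless since `p.coeff 1 = 0`.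
  obtain ⟨q, hq⟩ := exists_coeff_eq_mul_coeff p fun t => (1 - (t : K))⁻¹
  refine ⟨q, ext fun t => ?_⟩
  rw [coeff_X_mul_derivative, coeff_sub, hq]
  rcases eq_or_ne t 1 with rfl | ht
  · simp [hp]
  · have : (1 - (t : K)) ≠ 0 := sub_ne_zero.mpr (by exact_mod_cast ht.symm)
    field_simp
    ring

theorem exists_X_sub_C_mul_derivative_eq (p : K[X]) {a : K} (hp : (derivative p).eval a = 0) :
    ∃ q : K[X], (X - C a) * derivative q = q - p := by
  obtain ⟨q, hq⟩ := exists_X_mul_derivative_eq (taylor a p) (by rw [taylor_coeff_one, hp])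
  refine ⟨q.comp (X - C a), ?_⟩
  have htaylor : (taylor a p).comp (X - C a) = p := by
    rw [taylor_apply, comp_assoc, add_comp, X_comp, C_comp, sub_add_cancel, comp_X]
  rw [derivative_comp, derivative_X_sub_C, one_mul, ← htaylor, ← sub_comp, ← hq, mul_comp, X_comp]

theorem natDegree_le_of_X_sub_C_mul_derivative_eq {p q : K[X]} {a : K} {d : ℕ}
    (h : (X - C a) * derivative q = q - p) (hp : p.natDegree ≤ d) (hd : 1 ≤ d) :
    q.natDegree ≤ d := by
  by_contra! hq
  have htop := coeff_of_X_sub_C_mul_derivative_eq h q.natDegree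
  rw [coeff_eq_zero_of_natDegree_lt (Nat.lt_succ_self _), coeff_eq_zero_of_natDegree_lt
    (hp.trans_lt hq), mul_zero, sub_zero, mul_eq_zero, sub_eq_zero] at htop
  have h1 : (q.natDegree : K) ≠ 1 := by exact_mod_cast (by omega : q.natDegree ≠ 1)
  have hq0 : q ≠ 0 := by rintro rfl; simp at hq
  exact htop.elim h1 (leadingCoeff_ne_zero.mpr hq0)

end CharZero

end Polynomial

namespace Lagrange

variable {F ι : Type*} [Field F] {s : Finset ι} {v : ι → F}

theorem coeff_nodal_card_sub_one (hs : s.Nonempty) :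
    (nodal s v).coeff (#s - 1) = -∑ i ∈ s, v i := by
  rw [← prod_X_sub_C_nextCoeff, ← nodal_eq, nextCoeff_of_natDegree_pos] <;> simp [hs.card_pos]

variable [DecidableEq ι] {x : F}

theorem eval_div_eval_nodal_of_degree_lt (hvs : Set.InjOn v s) {r : F[X]} (hr : r.degree < #s)
    (hx : ∀ i ∈ s, x ≠ v i) :
    r.eval x / (nodal s v).eval x = ∑ i ∈ s, (x - v i)⁻¹ * (nodalWeight s v i * r.eval (v i)) := by
  rw [div_eq_iff (eval_nodal_not_at_node hx), mul_comm]
  nth_rw 1 [eq_interpolate hvs hr]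
  rw [eval_interpolate_not_at_node _ hx]
  exact congrArg _ (sum_congr rfl fun i _ => by ring)

theorem eval_div_eval_nodal (hvs : Set.InjOn v s) {f : F[X]} {k : ℕ} (hk : #s = k + 1)
    (hf : f.natDegree ≤ k + 2) (hx : ∀ i ∈ s, x ≠ v i) :
    f.eval x / (nodal s v).eval x = ∑ i ∈ s, (x - v i)⁻¹ * (nodalWeight s v i * f.eval (v i))
      + (f.coeff (k + 2) * x + (f.coeff (k + 1) + f.coeff (k + 2) * ∑ i ∈ s, v i)) := by
  have hcoeff : (nodal s v).coeff k = -∑ i ∈ s, v i := by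
    simpa [hk] using coeff_nodal_card_sub_one (v := v) (card_pos.mp (by omega : 0 < #s))
  set q := C (f.coeff (k + 2)) * X + C (f.coeff (k + 1) + f.coeff (k + 2) * ∑ i ∈ s, v i)
  have hlt : (f - q * nodal s v).degree < #s := by
    have := degree_sub_linear_mul_lt (nodal_monic (s := s) (v := v)) (by simp [hk]) hf
    rw [hcoeff, mul_neg, sub_neg_eq_add] at this
    rwa [hk]
  have hnodes (i : ι) (hi : i ∈ s) : (f - q * nodal s v).eval (v i) = f.eval (v i) := by
    rw [eval_sub, eval_mul, eval_nodal_at_node hi, mul_zero, sub_zero]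
  have := eval_div_eval_nodal_of_degree_lt hvs hlt hx
  rw [sum_congr rfl fun i hi => by rw [hnodes i hi], eval_sub, eval_mul, sub_div,
    mul_div_cancel_right₀ _ (eval_nodal_not_at_node hx)] at this
  simp only [q, eval_add, eval_mul, eval_C, eval_X] at this
  linear_combination this

end Lagrange

theorem coeff_of_derivative_eq_C_mul_nodal {K ι : Type*} [Field K] [CharZero K] {s : Finset ι}
    {v : ι → K} {m : ℕ} {p : K[X]} {c : K} (hp : derivative p = C c * nodal s v) (hs : #s = m + 1) :
    p.natDegree ≤ m + 2 ∧ ((m : K) + 2) * p.coeff (m + 2) = c ∧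
      ((m : K) + 1) * p.coeff (m + 1) = -c * ∑ i ∈ s, v i := by
  have hΦ (t : ℕ) : (p.coeff (t + 1)) * (t + 1) = c * (nodal s v).coeff t := by
    rw [← coeff_derivative, hp, coeff_C_mul]
  have hlead : (nodal s v).coeff (m + 1) = 1 := by
    rw [← hs, ← natDegree_nodal (s := s) (v := v)]
    exact nodal_monic.coeff_natDegree
  have hnext : (nodal s v).coeff m = -∑ i ∈ s, v i := by
    simpa [hs] using coeff_nodal_card_sub_one (v := v) (card_pos.mp (by omega : 0 < #s))
  refine ⟨?_, ?_, ?_⟩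
  · have := natDegree_C_mul_le c (nodal s v)
    rw [← hp, natDegree_derivative, natDegree_nodal, hs] at this
    omega
  · have := hΦ (m + 1)
    rw [hlead] at this
    push_cast at this
    linear_combination this
  · linear_combination hΦ m + c * hnext

theorem exists_X_sub_C_mul_derivative_eq_and_sum {κ K : Type*} [Fintype κ] [Field K] [CharZero K]
    (hκ : Fintype.card κ ≠ 0) (z : κ → K) {c : K} {p : K[X]}
    (hp : derivative p = C c * nodal univ z) :
    ∃ U : κ → K[X], (∀ k, (X - C (z k)) * derivative (U k) = U k - p) ∧
      derivative p + ∑ k, derivative (U k) = 0 := by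
  classical
  have hroot (k : κ) : (derivative p).eval (z k) = 0 := by
    rw [hp, eval_mul, eval_nodal_at_node (mem_univ k), mul_zero]
  choose U hU using fun k => exists_X_sub_C_mul_derivative_eq p (hroot k)
  have hU'' (k : κ) : derivative (derivative (U k)) = -(C c * nodal (univ.erase k) z) := by
    refine mul_left_cancel₀ (X_sub_C_ne_zero (z k)) ?_
    rw [X_sub_C_mul_derivative_derivative (hU k), hp, nodal_eq_mul_nodal_erase (mem_univ k)]
    ring
  -- The sum is constant; shifting every `U k` by `C e * (X - C (z k))` keeps the leaf equations
  -- and removes it.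
  set e := (derivative p + ∑ k, derivative (U k)).coeff 0 / Fintype.card κ
  have hconst : derivative p + ∑ k, derivative (U k) = C (Fintype.card κ * e) := by
    rw [mul_div_cancel₀ _ (Nat.cast_ne_zero.mpr hκ)]
    refine eq_C_of_derivative_eq_zero ?_
    rw [derivative_add, derivative_sum, sum_congr rfl fun k _ => hU'' k, hp, derivative_C_mul,
      derivative_nodal, sum_neg_distrib, ← mul_sum]
    ring
  have hshift (k : κ) : derivative (C e * (X - C (z k))) = C e := by
    rw [derivative_C_mul, derivative_X_sub_C, mul_one]
  refine ⟨fun k => U k - C e * (X - C (z k)), fun k => ?_, ?_⟩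
  · rw [derivative_sub, hshift]
    linear_combination hU k
  · simp only [derivative_sub, hshift, sum_sub_distrib, sum_const, card_univ, nsmul_eq_mul]
    rw [← add_sub_assoc, hconst, C_mul, C_eq_natCast]
    ring

theorem hasDerivAt_eval_div_eval_nodal {𝕜 κ : Type*} [NontriviallyNormedField 𝕜] [Fintype κ]
    [DecidableEq κ] {z : κ → 𝕜} {T : 𝕜[X]} {R : κ → 𝕜[X]}
    (h : wronskian (nodal univ z) T = -∑ k, nodal (univ.erase k) z * R k) {w : 𝕜}
    (hw : ∀ k, w ≠ z k) :
    HasDerivAt (fun u => T.eval u / (nodal univ z).eval u)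
      (-∑ k, (w - z k)⁻¹ * ((R k).eval w / (nodal univ z).eval w)) w := by
  have hΦ : (nodal univ z).eval w ≠ 0 := eval_nodal_not_at_node fun k _ => hw k
  refine ((T.hasDerivAt w).div ((nodal univ z).hasDerivAt w) hΦ).congr_deriv ?_
  have hΦk (k : κ) : (nodal univ z).eval w = (w - z k) * (nodal (univ.erase k) z).eval w := by
    rw [nodal_eq_mul_nodal_erase (mem_univ k), eval_mul, eval_sub, eval_X, eval_C]
  have := congrArg (eval w) h
  simp only [wronskian, eval_neg, eval_sub, eval_mul, eval_finsetSum] at this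
  have hterm (k : κ) : (w - z k)⁻¹ * ((R k).eval w / (nodal univ z).eval w)
      * (nodal univ z).eval w ^ 2 = (nodal (univ.erase k) z).eval w * (R k).eval w := by
    rw [hΦk k]
    field_simp [sub_ne_zero.mpr (hw k)]
  rw [div_eq_iff (pow_ne_zero 2 hΦ), neg_mul, sum_mul, sum_congr rfl fun k _ => hterm k]
  linear_combination this

-- Hub `0` and leaves `k + 1` of the star formed by the transpositions `(0, k + 1)` defining `A`.
def leaf (n : ℕ) (k : Fin (n - 1)) : Fin n := ⟨k + 1, by omega⟩

theorem leaf_ne_zero {n : ℕ} [NeZero n] (k : Fin (n - 1)) : leaf n k ≠ 0 := by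
  simp [leaf, Fin.ext_iff]

theorem leaf_injective {n : ℕ} : Function.Injective (leaf n) := fun a b h => by
  simpa [leaf, Fin.ext_iff] using h

theorem eq_zero_or_eq_leaf {n : ℕ} [NeZero n] (i : Fin n) : i = 0 ∨ ∃ k, i = leaf n k := by
  rcases i with ⟨_ | i, hi⟩
  · exact .inl rfl
  · exact .inr ⟨⟨i, by omega⟩, rfl⟩

theorem exists_extend_leaf {n : ℕ} [NeZero n] {α : Type*} (a : α) (f : Fin (n - 1) → α) :
    ∃ g : Fin n → α, g 0 = a ∧ ∀ k, g (leaf n k) = f k :=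
  ⟨fun i => if h : (i : ℕ) = 0 then a else f ⟨i - 1, by omega⟩, by simp,
    fun k => by simp [leaf]⟩

theorem mulVec_Amat_apply {n : ℕ} [NeZero n] (z : Fin (n - 1) → ℂ) (w : ℂ) (v : Fin n → ℂ) (i : Fin n) :
    (Amat n z w *ᵥ v) i = ∑ k, (w - z k)⁻¹ * v (Equiv.swap 0 (leaf n k) i) := by
  simp only [Amat, Matrix.sum_mulVec, Matrix.smul_mulVec, Finset.sum_apply, Pi.smul_apply,
    smul_eq_mul]
  refine sum_congr rfl fun k _ => ?_
  congr 1
  simp [Pk, permP, Matrix.mulVec, dotProduct, leaf, eq_comm (a := i), Equiv.swap_apply_eq_iff]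

theorem wronskian_nodal_eq_neg_sum_swap {n : ℕ} [NeZero n] {K : Type*} [Field K]
    (z : Fin (n - 1) → K) (T : Fin n → K[X])
    (hleaf : ∀ k, (X - C (z k)) * derivative (T (leaf n k)) = T (leaf n k) - T 0)
    (hsum : derivative (T 0) + ∑ k, derivative (T (leaf n k)) = 0) (i : Fin n) :
    wronskian (nodal univ z) (T i)
      = -∑ k, nodal (univ.erase k) z * T (Equiv.swap 0 (leaf n k) i) := by
  rw [wronskian, eq_neg_iff_add_eq_zero]
  have hΦ (k : Fin (n - 1)) := nodal_eq_mul_nodal_erase (v := z) (mem_univ k)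
  rcases eq_zero_or_eq_leaf i with rfl | ⟨j, rfl⟩
  · have hterm (k : Fin (n - 1)) : nodal (univ.erase k) z * T (leaf n k)
        = nodal (univ.erase k) z * T 0 + nodal univ z * derivative (T (leaf n k)) := by
      linear_combination -derivative (T (leaf n k)) * hΦ k - nodal (univ.erase k) z * hleaf k
    simp only [Equiv.swap_apply_left]
    rw [sum_congr rfl fun k _ => hterm k, sum_add_distrib, ← sum_mul, ← mul_sum,
      ← derivative_nodal]
    linear_combination nodal univ z * hsum
  · have hfix (k : Fin (n - 1)) (hk : k ∈ univ.erase j) :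
        Equiv.swap 0 (leaf n k) (leaf n j) = leaf n j :=
      Equiv.swap_apply_of_ne_of_ne (leaf_ne_zero j) (leaf_injective.ne (ne_of_mem_erase hk).symm)
    have hrest : ∑ k ∈ univ.erase j, nodal (univ.erase k) z
        = derivative (nodal univ z) - nodal (univ.erase j) z := by
      rw [derivative_nodal, ← add_sum_erase _ _ (mem_univ j), add_sub_cancel_left]
    rw [← add_sum_erase _ _ (mem_univ j), Equiv.swap_apply_right, sum_congr rfl fun k hk => by
      rw [hfix k hk], ← sum_mul, hrest]
    linear_combination derivative (T (leaf n j)) * hΦ j + nodal (univ.erase j) z * hleaf j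

theorem sum_mul_Nvec_zero {n : ℕ} [NeZero n] (z : Fin (n - 1) → ℂ) :
    ∑ j, z j * Nvec n j 0 = ∑ j, z j := by
  simp [Nvec]

theorem sum_mul_Nvec_leaf {n : ℕ} (z : Fin (n - 1) → ℂ) (k : Fin (n - 1)) :
    ∑ j, z j * Nvec n j (leaf n k) = z k + -2 / ((n : ℂ) - 2) * (∑ j, z j - z k) := by
  have hN (j : Fin (n - 1)) : Nvec n j (leaf n k) = -2 / ((n : ℂ) - 2)
      + if j = k then 1 - -2 / ((n : ℂ) - 2) else 0 := by
    simp only [Nvec, leaf, Fin.ext_iff, Nat.add_eq_zero_iff, one_ne_zero, and_false, false_or,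
      Nat.add_right_cancel_iff, eq_comm (a := (k : ℕ))]
    split_ifs <;> ring
  simp only [hN, mul_add, sum_add_distrib, mul_ite, mul_zero, sum_ite_eq', mem_univ, if_true,
    ← sum_mul]
  ring

theorem natDegree_and_top_coeffs_of_hub_leaf {m : ℕ} (hm : m ≠ 0) (z : Fin (m + 2 - 1) → ℂ)
    (T : Fin (m + 2) → ℂ[X])
    (hhub : derivative (T 0) = C (((m : ℂ) + 1) * (m + 2)) * nodal univ z)
    (hleaf : ∀ k, (X - C (z k)) * derivative (T (leaf _ k)) = T (leaf _ k) - T 0)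
    (i : Fin (m + 2)) :
    (T i).natDegree ≤ m + 2 ∧ (T i).coeff (m + 2) = v3 (m + 2) i ∧
      (T i).coeff (m + 1) + (T i).coeff (m + 2) * ∑ k, z k = -∑ j, z j * Nvec (m + 2) j i := by
  obtain ⟨hdeg₀, htop₀, hnext₀⟩ := coeff_of_derivative_eq_C_mul_nodal (m := m) hhub (by simp)
  have hm1 : (m : ℂ) + 1 ≠ 0 := Nat.cast_add_one_ne_zero m
  have hm2 : (m : ℂ) + 2 ≠ 0 := by exact_mod_cast Nat.succ_ne_zero (m + 1)
  replace htop₀ : (T 0).coeff (m + 2) = m + 1 := mul_left_cancel₀ hm2 (by linear_combination htop₀)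
  replace hnext₀ : (T 0).coeff (m + 1) = -(m + 2) * ∑ k, z k :=
    mul_left_cancel₀ hm1 (by linear_combination hnext₀)
  rcases eq_zero_or_eq_leaf i with rfl | ⟨k, rfl⟩
  · refine ⟨hdeg₀, by simp only [v3, htop₀, if_pos, Nat.cast_add, Nat.cast_ofNat]; ring, ?_⟩
    rw [sum_mul_Nvec_zero, hnext₀, htop₀]
    ring
  · have h := hleaf k
    have htop := coeff_of_X_sub_C_mul_derivative_eq h (m + 2)
    have hnext := coeff_of_X_sub_C_mul_derivative_eq h (m + 1)
    have hdeg := natDegree_le_of_X_sub_C_mul_derivative_eq h hdeg₀ (by omega)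
    rw [coeff_eq_zero_of_natDegree_lt (n := m + 2 + 1) (by omega), htop₀] at htop
    replace htop : (T (leaf _ k)).coeff (m + 2) = -1 :=
      mul_left_cancel₀ hm1 (by push_cast at htop; linear_combination htop)
    refine ⟨hdeg, by simp [v3, leaf_ne_zero, htop], ?_⟩
    rw [sum_mul_Nvec_leaf, htop]
    rw [htop, hnext₀] at hnext
    push_cast at hnext ⊢
    rw [add_sub_cancel_right]
    have hm0 : (m : ℂ) ≠ 0 := by exact_mod_cast hm
    field_simp
    linear_combination hnext

/-- There are vectors L₁,…,L_{n-1} such that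
Y(z) = Σ_k L_k/(z - z_k) + z·v₃ - Σ_i z_i·N_i solves Y' = -A(z)·Y. -/
theorem rational_solution_Yn (n : ℕ) [NeZero n] (hn : 3 ≤ n)
    (z : Fin (n - 1) → ℂ) (hz : Function.Injective z) :
    ∃ (L : Fin (n - 1) → Fin n → ℂ) (Y : ℂ → Fin n → ℂ),
      (∀ u : ℂ, Y u = (∑ k : Fin (n - 1), (u - z k)⁻¹ • L k) + u • v3 n
          - ∑ i : Fin (n - 1), z i • Nvec n i) ∧
      (∀ w : ℂ, (∀ k, w ≠ z k) → ∀ i,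
        HasDerivAt (fun u => Y u i) (-(Amat n z w *ᵥ Y w) i) w) := by
  obtain ⟨m, rfl⟩ : ∃ m, n = m + 2 := ⟨n - 2, by omega⟩
  -- The factor `(m + 1) * (m + 2)` makes the leading coefficient of `T₀` equal to `v3 _ 0`.
  obtain ⟨T₀, hT₀⟩ := exists_derivative_eq (C (((m : ℂ) + 1) * (m + 2)) * nodal univ z)
  obtain ⟨U, hU, hsum⟩ := exists_X_sub_C_mul_derivative_eq_and_sum (by simp) z hT₀
  obtain ⟨T, rfl, hTU⟩ := exists_extend_leaf T₀ U
  simp only [← hTU] at hU hsum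
  have hT := natDegree_and_top_coeffs_of_hub_leaf (by omega) z T hT₀ hU
  set Y : ℂ → Fin (m + 2) → ℂ := fun u => (∑ k, (u - z k)⁻¹ • fun i =>
    nodalWeight univ z k * (T i).eval (z k)) + u • v3 (m + 2) - ∑ i, z i • Nvec (m + 2) i
  have hY (u : ℂ) (hu : ∀ k, u ≠ z k) (i : Fin (m + 2)) :
      Y u i = (T i).eval u / (nodal univ z).eval u := by
    rw [eval_div_eval_nodal hz.injOn (by simp) (hT i).1 fun k _ => hu k, (hT i).2.2, (hT i).2.1]
    simp only [Y, Pi.sub_apply, Pi.add_apply, Finset.sum_apply, Pi.smul_apply, smul_eq_mul]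
    ring
  refine ⟨_, Y, fun u => rfl, fun w hw i => ?_⟩
  have hnear : ∀ᶠ u in nhds w, Y u i = (T i).eval u / (nodal univ z).eval u := by
    filter_upwards [(Set.finite_range z).isClosed.isOpen_compl.mem_nhds
      (by simpa [eq_comm] using hw)] with u hu
    exact hY u (by simpa [eq_comm] using hu) i
  have hderiv := hasDerivAt_eval_div_eval_nodal (wronskian_nodal_eq_neg_sum_swap z T hU hsum i) hw
  refine (hderiv.congr_of_eventuallyEq hnear).congr_deriv ?_
  simp only [mulVec_Amat_apply, hY w hw]
end

section
/- Let n ≥ 2 and let z = (z_1, …, z_n) ∈ ℂ^n have pairwise distinct coordinates. For 1 ≤ i ≤ n define A_i(z) = Σ_{k≠i} P(i,k)/(z_i − z_k). Then for all i ≠ j, the matrices A_i(z) and A_j(z) commute: A_i(z)·A_j(z) = A_j(z)·A_i(z). (Together with P(i,j) = P(j,i), this implies that the Knizhnik–Zamolodchikov system ∂W/∂z_i = ρ·A_i(z)·W, i = 1, …, n, is consistent.) -/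
open Matrix

/-- A_i(z) = Σ_{k ≠ i} P(i,k)/(z_i - z_k). -/
noncomputable def Amulti (n : ℕ) (z : Fin n → ℂ) (i : Fin n) : Matrix (Fin n) (Fin n) ℂ :=
  ∑ k ∈ Finset.univ.erase i, (z i - z k)⁻¹ • permP n i k

/-! Write `t a b` for the transposition matrices. Then
`⁅A_i, A_j⁆ = ∑_{k,l} ⁅t i k, t j l⁆ / ((z_i - z_k)(z_j - z_l))`, and since transpositions with
disjoint supports commute, only the terms with `k = l`, `k = j` or `l = i` survive. For fixed `m`
the three terms involving `m` are multiples of the single bracket `⁅t i j, t j m⁆`, by the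
infinitesimal braid relations (the defining relations of the Drinfeld–Kohno Lie algebra, which
transpositions satisfy in every representation of the symmetric group), and their coefficients
cancel by the partial fraction identity `1/(xy) = 1/(x(x+y)) + 1/(y(x+y))`. -/

open Finset

attribute [local instance] LieRing.ofAssociativeRing

section

variable {α : Type*}

structure InfinitesimalBraidRelations {L : Type*} [LieRing L] (t : α → α → L) : Prop where
  symm : ∀ a b, t a b = t b a
  lie_eq_zero_of_disjoint :
    ∀ {a b c d}, a ≠ c → a ≠ d → b ≠ c → b ≠ d → ⁅t a b, t c d⁆ = 0
  lie_add_eq_zero : ∀ {a b c}, a ≠ b → a ≠ c → b ≠ c → ⁅t a b, t a c + t b c⁆ = 0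

theorem InfinitesimalBraidRelations.of_monoidHom [DecidableEq α] {A : Type*} [Ring A]
    (ρ : Equiv.Perm α →* A) : InfinitesimalBraidRelations fun a b ↦ ρ (Equiv.swap a b) := by
  have conj : ∀ a b c d, ρ (Equiv.swap a b) * ρ (Equiv.swap c d) =
      ρ (Equiv.swap (Equiv.swap a b c) (Equiv.swap a b d)) * ρ (Equiv.swap a b) := by
    intro a b c d
    rw [← map_mul, ← map_mul, Equiv.mul_swap_eq_swap_mul]
  refine ⟨fun a b ↦ by rw [Equiv.swap_comm], fun hac had hbc hbd ↦ ?_,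
    fun {a b c} _ hac hbc ↦ ?_⟩
  · rw [Ring.lie_def, conj, Equiv.swap_apply_of_ne_of_ne hac.symm hbc.symm,
      Equiv.swap_apply_of_ne_of_ne had.symm hbd.symm, sub_self]
  · rw [Ring.lie_def, mul_add, conj a b a c, conj a b b c, Equiv.swap_apply_left,
      Equiv.swap_apply_right, Equiv.swap_apply_of_ne_of_ne hac.symm hbc.symm, add_mul]
    abel

theorem sum_sum_eq_sum_diag_add_row_add_col [Fintype α] [DecidableEq α] {M : Type*}
    [AddCommMonoid M] (f : α → α → M) (i j : α)
    (hf : ∀ k l, k ≠ l → k ≠ j → l ≠ i → f k l = 0) (hii : f i i = 0) (hjj : f j j = 0)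
    (hji : f j i = 0) :
    ∑ k, ∑ l, f k l = ∑ m, (f m m + f j m + f m i) := by
  have split : ∀ k l, f k l = (if k = l then f k l else 0) + (if k = j then f k l else 0)
      + (if l = i then f k l else 0) := by
    intro k l
    by_cases hkl : k = l <;> by_cases hkj : k = j <;> by_cases hli : l = i <;>
      subst_vars <;> simp_all
  rw [sum_congr rfl fun k _ ↦ sum_congr rfl fun l _ ↦ split k l]
  simp only [sum_add_distrib, sum_ite_irrel, sum_const_zero, sum_ite_eq, sum_ite_eq', mem_univ,
    if_true]

variable {K L : Type*} [Field K] [LieRing L] [LieAlgebra K L] {t : α → α → L}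

theorem InfinitesimalBraidRelations.three_term_eq_zero (ht : InfinitesimalBraidRelations t)
    {z : α → K} (hz : Function.Injective z) {i j m : α} (hij : i ≠ j) (him : i ≠ m)
    (hjm : j ≠ m) :
    ((z i - z m)⁻¹ * (z j - z m)⁻¹) • ⁅t i m, t j m⁆
      + ((z i - z j)⁻¹ * (z j - z m)⁻¹) • ⁅t i j, t j m⁆
      + ((z i - z m)⁻¹ * (z j - z i)⁻¹) • ⁅t i m, t j i⁆ = 0 := by
  have h₁ : ⁅t i m, t j m⁆ = -⁅t i j, t j m⁆ := by
    have := ht.lie_add_eq_zero hjm hij.symm him.symm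
    rw [ht.symm j i, ht.symm m i, lie_add, add_eq_zero_iff_eq_neg] at this
    rw [← lie_skew, ← lie_skew (t i j), this, neg_neg]
  have h₂ : ⁅t i m, t j i⁆ = ⁅t i j, t j m⁆ := by
    have := ht.lie_add_eq_zero hij him hjm
    rw [lie_add, add_eq_zero_iff_eq_neg] at this
    rw [ht.symm j i, ← lie_skew, this, neg_neg]
  have hzij : z i - z j ≠ 0 := sub_ne_zero.mpr (hz.ne hij)
  have hzjm : z j - z m ≠ 0 := sub_ne_zero.mpr (hz.ne hjm)
  have hzim : z i - z m ≠ 0 := sub_ne_zero.mpr (hz.ne him)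
  have partial_fractions : (z i - z j)⁻¹ * (z j - z m)⁻¹ + (z i - z m)⁻¹ * (z j - z i)⁻¹
      = (z i - z m)⁻¹ * (z j - z m)⁻¹ := by
    rw [← neg_sub (z i)]
    field_simp
    ring
  rw [h₁, h₂, smul_neg, add_assoc, ← add_smul, partial_fractions, neg_add_cancel]

variable [Fintype α] [DecidableEq α]

def kzConnection (z : α → K) (t : α → α → L) (i : α) : L :=
  ∑ k ∈ univ.erase i, (z i - z k)⁻¹ • t i k

theorem kzConnection_eq_sum (z : α → K) (t : α → α → L) (i : α) :
    kzConnection z t i = ∑ k, (z i - z k)⁻¹ • t i k :=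
  -- the extra term `k = i` is `0⁻¹ • t i i = 0`
  sum_erase _ (by simp)

theorem InfinitesimalBraidRelations.lie_kzConnection_eq_zero
    (ht : InfinitesimalBraidRelations t) {z : α → K} (hz : Function.Injective z) (i j : α) :
    ⁅kzConnection z t i, kzConnection z t j⁆ = 0 := by
  rcases eq_or_ne i j with rfl | hij
  · exact lie_self _
  set f : α → α → L := fun k l ↦ ((z i - z k)⁻¹ * (z j - z l)⁻¹) • ⁅t i k, t j l⁆ with hf
  have expand : ⁅kzConnection z t i, kzConnection z t j⁆ = ∑ k, ∑ l, f k l := by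
    rw [kzConnection_eq_sum, kzConnection_eq_sum, sum_lie]
    refine sum_congr rfl fun k _ ↦ ?_
    rw [smul_lie, lie_sum, smul_sum]
    refine sum_congr rfl fun l _ ↦ ?_
    rw [lie_smul, smul_smul]
  have f_left : ∀ l, f i l = 0 := fun l ↦ by simp [hf]
  have f_right : ∀ k, f k j = 0 := fun k ↦ by simp [hf]
  have f_ji : f j i = 0 := by simp only [hf, ht.symm j i, lie_self, smul_zero]
  have f_disjoint : ∀ k l, k ≠ l → k ≠ j → l ≠ i → f k l = 0 := by
    intro k l hkl hkj hli
    simp only [hf, ht.lie_eq_zero_of_disjoint hij hli.symm hkj hkl, smul_zero]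
  rw [expand, sum_sum_eq_sum_diag_add_row_add_col f i j f_disjoint (f_left i) (f_right j) f_ji]
  refine sum_eq_zero fun m _ ↦ ?_
  rcases eq_or_ne m i with rfl | hmi
  · simp only [f_left, f_ji, add_zero]
  rcases eq_or_ne m j with rfl | hmj
  · simp only [f_right, f_ji, add_zero]
  exact ht.three_term_eq_zero hz hij hmi.symm hmj.symm

end

theorem permP_eq_permMatrixHom (n : ℕ) (a b : Fin n) :
    permP n a b = Matrix.permMatrixHom (R := ℂ) (Equiv.swap a b) := by
  ext p q
  simp [permP, Equiv.toPEquiv_apply, Equiv.swap_apply_eq_iff]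

theorem KZ_consistency_general (n : ℕ) (z : Fin n → ℂ)
    (hz : Function.Injective z) (i j : Fin n) :
    Amulti n z i * Amulti n z j = Amulti n z j * Amulti n z i := by
  have ht : InfinitesimalBraidRelations (permP n) := by
    simpa only [← permP_eq_permMatrixHom] using
      InfinitesimalBraidRelations.of_monoidHom (A := Matrix (Fin n) (Fin n) ℂ) permMatrixHom
  rw [← sub_eq_zero, ← Ring.lie_def]
  exact ht.lie_kzConnection_eq_zero hz i j

/-- For pairwise distinct coordinates z and i ≠ j, the matrices A_i(z) and A_j(z)
commute (consistency of the KZ system). -/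
theorem KZ_consistency (n : ℕ) (hn : 2 ≤ n) (z : Fin n → ℂ)
    (hz : Function.Injective z) (i j : Fin n) (hij : i ≠ j) :
    Amulti n z i * Amulti n z j = Amulti n z j * Amulti n z i :=
  KZ_consistency_general n z hz i j
end
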